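/- arXiv:2103.01324 — 11 statements merged into one kernel-verified Lean document; each statement's English description precedes it below -/
import Mathlib

section
/- Let 𝒞_1, …, 𝒞_m be classes of subsets of a common set with finite VC dimensions d_VC(𝒞_j) = d_j < +∞, and let d = Σ_{j=1}^m d_j. Define ⊓_{j=1}^m 𝒞_j = { ∩_{j=1}^m C_j : C_j ∈ 𝒞_j } and ⊔_{j=1}^m 𝒞_j = { ∪_{j=1}^m C_j : C_j ∈ 𝒞_j }. Then max( d_VC(⊓_{j=1}^m 𝒞_j), d_VC(⊔_{j=1}^m 𝒞_j) ) ≤ (e/((e−1)·log 2)) · d · log( (e/log 2) · m ). -/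
open MeasureTheory Real Set

/-- A family `H` of subsets of `α` shatters a finite set `S` if every subset `D ⊆ S`
can be picked out by some `C ∈ H`. -/
def ShattersFam {α : Type*} (H : Set (Set α)) (S : Finset α) : Prop :=
  ∀ D : Finset α, D ⊆ S → ∃ C ∈ H, (D : Set α) ⊆ C ∧ ((S : Set α) \ (D : Set α)) ∩ C = ∅

/-- The VC dimension of a family of subsets: the supremum (in `ℕ∞`) of cardinalities
of finite sets it shatters. -/
noncomputable def vcDim {α : Type*} (H : Set (Set α)) : ℕ∞ :=
  ⨆ S ∈ {S : Finset α | ShattersFam H S}, (S.card : ℕ∞)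

/-!
If `S` is shattered by the sets `φ g`, where `φ g` is a pointwise Boolean combination (such
as `⋂ j, g j` or `⋃ j, g j`) of sets `g j ∈ 𝒞 j`, then `φ g ∩ S` is determined by the traces
`g j ∩ S`, so the `2 ^ n` subsets of `S` (`n = |S|`) inject into the product of the traces of
the `𝒞 j` on `S`. By the Sauer–Shelah lemma the trace of `𝒞 j` has at most
`∑_{i ≤ d j} (n choose i) ≤ (e n / d j) ^ d j` elements (when `d j ≤ n`), and weighted AM-GM
bounds the product by `(e n m / d) ^ d`. Taking logarithms, `n log 2 ≤ d log (e n m / d)`,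
and `log y ≤ y / e` turns this into the linear bound on `n`.
-/

open Finset

section Trace

open scoped Classical

variable {α : Type*}

noncomputable def traceOn (H : Set (Set α)) (S : Finset α) : Finset (Finset α) :=
  {A ∈ S.powerset | ∃ C ∈ H, S.filter (· ∈ C) = A}

variable {H : Set (Set α)} {S s : Finset α}

lemma mem_traceOn {A : Finset α} : A ∈ traceOn H S ↔ ∃ C ∈ H, S.filter (· ∈ C) = A := by
  simp only [traceOn, mem_filter, Finset.mem_powerset, and_iff_right_iff_imp]
  rintro ⟨C, -, rfl⟩
  exact filter_subset _ _

lemma subset_of_mem_traceOn {A : Finset α} (hA : A ∈ traceOn H S) : A ⊆ S :=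
  Finset.mem_powerset.1 (mem_filter.1 hA).1

lemma filter_mem_eq_iff {C : Set α} {D : Finset α} (hD : D ⊆ s) :
    s.filter (· ∈ C) = D ↔ (D : Set α) ⊆ C ∧ ((s : Set α) \ D) ∩ C = ∅ := by
  simp only [Finset.ext_iff, mem_filter, Set.subset_def, mem_coe, Set.eq_empty_iff_forall_notMem,
    Set.mem_inter_iff, Set.mem_sdiff]
  grind

lemma shattersFam_iff : ShattersFam H s ↔ ∀ t ⊆ s, ∃ C ∈ H, s.filter (· ∈ C) = t :=
  forall₂_congr fun _ ht => exists_congr fun _ => and_congr_right' (filter_mem_eq_iff ht).symm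

lemma Finset.Shatters.shattersFam_of_traceOn (hs : (traceOn H S).Shatters s) :
    ShattersFam H s := by
  obtain ⟨u, hu, hsu⟩ := hs.exists_superset
  have hsS : s ⊆ S := hsu.trans (subset_of_mem_traceOn hu)
  refine shattersFam_iff.2 fun t ht => ?_
  obtain ⟨_, hv, rfl⟩ := hs ht
  obtain ⟨C, hC, rfl⟩ := mem_traceOn.1 hv
  exact ⟨C, hC, by rw [inter_filter, inter_eq_left.2 hsS]⟩

lemma card_le_of_vcDim_eq {k : ℕ} (h : vcDim H = k) (hs : ShattersFam H s) : #s ≤ k := by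
  have : (#s : ℕ∞) ≤ vcDim H :=
    le_iSup₂ (f := fun S (_ : S ∈ {S | ShattersFam H S}) => (#S : ℕ∞)) s hs
  exact_mod_cast h ▸ this

lemma card_traceOn_le_sum_choose {k : ℕ} (hk : ∀ s, ShattersFam H s → #s ≤ k) :
    #(traceOn H S) ≤ ∑ i ∈ range (k + 1), (#S).choose i := by
  simp_rw [← card_powersetCard]
  refine (card_le_card_shatterer _).trans <|
    (Finset.card_le_card fun s hs => mem_biUnion.2 ⟨#s, ?_⟩).trans card_biUnion_le
  have hs := mem_shatterer.1 hs
  obtain ⟨u, hu, hsu⟩ := hs.exists_superset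
  exact ⟨mem_range.2 (Nat.lt_succ_of_le (hk s hs.shattersFam_of_traceOn)),
    mem_powersetCard.2 ⟨hsu.trans (subset_of_mem_traceOn hu), rfl⟩⟩

theorem two_pow_card_le_prod_card_traceOn {ι : Type*} [Fintype ι] (𝒞 : ι → Set (Set α))
    (P : (ι → Prop) → Prop) (φ : (ι → Set α) → Set α)
    (hφ : ∀ g x, x ∈ φ g ↔ P fun j => x ∈ g j)
    (hS : ShattersFam {C | ∃ g : ι → Set α, (∀ j, g j ∈ 𝒞 j) ∧ C = φ g} S) :
    2 ^ #S ≤ ∏ j, #(traceOn (𝒞 j) S) := by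
  have hrep : ∀ D ∈ S.powerset,
      ∃ g : ι → Set α, (∀ j, g j ∈ 𝒞 j) ∧ S.filter (· ∈ φ g) = D := by
    intro D hD
    obtain ⟨_, ⟨g, hg, rfl⟩, hgD⟩ := shattersFam_iff.1 hS D (Finset.mem_powerset.1 hD)
    exact ⟨g, hg, hgD⟩
  choose! g hg hgD using hrep
  have hinj : Set.InjOn (fun D j => S.filter (· ∈ g D j)) S.powerset := by
    intro D hD D' hD' htr
    rw [← hgD D hD, ← hgD D' hD', filter_inj']
    intro x hx
    have hx' : (fun j => x ∈ g D j) = fun j => x ∈ g D' j :=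
      funext fun j => propext (filter_inj'.1 (congrFun htr j) hx)
    rw [hφ, hφ, hx']
  have := card_le_card_of_injOn _ (fun D hD => Fintype.mem_piFinset.2 fun j =>
    mem_traceOn.2 ⟨g D j, hg D hD j, rfl⟩) hinj
  rwa [card_powerset, Fintype.card_piFinset] at this

end Trace

lemma pow_mul_sum_range_choose_le {r : ℝ} (hr0 : 0 ≤ r) (hr1 : r ≤ 1) {n k : ℕ}
    (hkn : k ≤ n) :
    r ^ k * ∑ i ∈ range (k + 1), (n.choose i : ℝ) ≤ (1 + r) ^ n :=
  calc r ^ k * ∑ i ∈ range (k + 1), (n.choose i : ℝ)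
      ≤ ∑ i ∈ range (k + 1), r ^ i * n.choose i := by
        rw [mul_sum]
        refine sum_le_sum fun i hi => ?_
        exact mul_le_mul_of_nonneg_right
          (pow_le_pow_of_le_one hr0 hr1 (Nat.lt_succ_iff.1 (mem_range.1 hi))) (by positivity)
    _ ≤ ∑ i ∈ range (n + 1), r ^ i * n.choose i :=
        sum_le_sum_of_subset_of_nonneg (range_subset_range.2 (by omega))
          fun _ _ _ => by positivity
    _ = (1 + r) ^ n := by
        rw [add_comm 1 r, add_pow]
        exact sum_congr rfl fun i _ => by ring

lemma sum_range_choose_le_exp_mul_div_pow {n k : ℕ} (hkn : k ≤ n) :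
    ∑ i ∈ range (k + 1), (n.choose i : ℝ) ≤ (exp 1 * n / k) ^ k := by
  rcases k.eq_zero_or_pos with rfl | hk
  · simp
  have hn : (0 : ℝ) < n := by exact_mod_cast hk.trans_le hkn
  have hr : (0 : ℝ) < k / n := by positivity
  have hr1 : (k : ℝ) / n ≤ 1 := div_le_one_of_le₀ (by exact_mod_cast hkn) hn.le
  have hexp : (1 + k / n : ℝ) ^ n ≤ exp 1 ^ k :=
    calc (1 + k / n : ℝ) ^ n ≤ exp (k / n) ^ n := by
          gcongr; linarith [add_one_le_exp ((k : ℝ) / n)]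
      _ = exp 1 ^ k := by rw [← exp_nat_mul, ← exp_nat_mul, mul_div_cancel₀ _ hn.ne', mul_one]
  have := (pow_mul_sum_range_choose_le hr.le hr1 hkn).trans hexp
  rwa [mul_comm, ← le_div_iff₀ (by positivity), ← div_pow, div_div_eq_mul_div] at this

lemma prod_div_pow_le {ι : Type*} [Fintype ι] (d : ι → ℕ) {x : ℝ} (hx : 0 ≤ x) :
    ∏ j, (x / d j) ^ d j ≤ (x * Fintype.card ι / ∑ j, d j) ^ ∑ j, d j := by
  rcases (∑ j, d j).eq_zero_or_pos with hD | hD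
  · simp [sum_eq_zero_iff.1 hD]
  have hD' : (0 : ℝ) < ∑ j, (d j : ℝ) := by exact_mod_cast hD
  have hz (j : ι) : 0 ≤ x / d j := by positivity
  have hterm (j : ι) : (d j : ℝ) * (x / d j) ≤ x := by
    rcases eq_or_ne (d j : ℝ) 0 with h | h
    · simp [h, hx]
    · rw [mul_div_cancel₀ _ h]
  have amgm := geom_mean_le_arith_mean Finset.univ (fun j => (d j : ℝ)) _
    (fun _ _ => by positivity) hD' fun j _ => hz j
  rw [rpow_inv_le_iff_of_pos (prod_nonneg fun j _ => rpow_nonneg (hz j) _)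
    (div_nonneg (sum_nonneg fun j _ => by positivity) hD'.le) hD'] at amgm
  simp only [rpow_natCast, ← Nat.cast_sum] at amgm
  refine amgm.trans (pow_le_pow_left₀ (by positivity) ?_ _)
  gcongr
  calc ∑ j, (d j : ℝ) * (x / d j) ≤ ∑ _j : ι, x := sum_le_sum fun j _ => hterm j
    _ = x * Fintype.card ι := by rw [sum_const, card_univ, nsmul_eq_mul, mul_comm]

lemma log_le_div_exp_one {y : ℝ} (hy : 0 < y) : log y ≤ y / exp 1 := by
  have h := log_le_sub_one_of_pos (div_pos hy (exp_pos 1))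
  rw [log_div hy.ne' (exp_pos 1).ne', log_exp] at h
  linarith

lemma le_of_mul_log_two_le_mul_log {n m D : ℝ} (hn : 0 < n) (hm : 0 < m) (hD : 0 < D)
    (h : n * log 2 ≤ D * log (exp 1 * n * m / D)) :
    n ≤ exp 1 / ((exp 1 - 1) * log 2) * D * log (exp 1 / log 2 * m) := by
  have hlog2 : 0 < log 2 := log_pos one_lt_two
  have he : 1 < exp 1 := one_lt_exp_iff.2 one_pos
  set L := log (exp 1 / log 2 * m)
  have hsplit : log (exp 1 * n * m / D) = L + log (n * log 2 / D) := by
    rw [← log_mul (by positivity) (by positivity)]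
    congr 1
    field_simp
  have hX := log_le_div_exp_one (show 0 < n * log 2 / D by positivity)
  have key : n * log 2 * (exp 1 - 1) ≤ exp 1 * D * L := by
    have h' : n * log 2 ≤ D * L + n * log 2 / exp 1 := by
      calc n * log 2 ≤ D * (L + log (n * log 2 / D)) := hsplit ▸ h
        _ ≤ D * (L + n * log 2 / D / exp 1) := by gcongr
        _ = D * L + n * log 2 / exp 1 := by field_simp
    have := mul_le_mul_of_nonneg_left h' (exp_pos 1).le
    rw [mul_add, mul_div_cancel₀ _ (exp_pos 1).ne'] at this
    linarith
  rw [div_mul_eq_mul_div, div_mul_eq_mul_div, le_div_iff₀ (by nlinarith)]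
  linarith

lemma one_le_mul_log {m : ℝ} (hm : 1 ≤ m) :
    1 ≤ exp 1 / ((exp 1 - 1) * log 2) * log (exp 1 / log 2 * m) := by
  have hlog2 : 0 < log 2 := log_pos one_lt_two
  have hlog2' : log 2 < 1 := log_two_lt_d9.trans (by norm_num)
  have he : 1 < exp 1 := one_lt_exp_iff.2 one_pos
  have hK : 1 ≤ exp 1 / ((exp 1 - 1) * log 2) := by
    rw [one_le_div (by nlinarith)]
    nlinarith
  have hL : 1 ≤ log (exp 1 / log 2 * m) := by
    refine (log_exp 1).symm.le.trans (log_le_log (exp_pos 1) ?_)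
    rw [div_mul_eq_mul_div, le_div_iff₀ hlog2]
    nlinarith
  nlinarith

theorem card_le_of_two_pow_le_prod_sum_choose {ι : Type*} [Fintype ι] (d : ι → ℕ) {n : ℕ}
    (h : 2 ^ n ≤ ∏ j, ∑ i ∈ range (d j + 1), n.choose i) :
    (n : ℝ) ≤ exp 1 / ((exp 1 - 1) * log 2) * (∑ j, (d j : ℝ)) *
      log (exp 1 / log 2 * Fintype.card ι) := by
  rw [← Nat.cast_sum]
  set D := ∑ j, d j
  rcases D.eq_zero_or_pos with hD | hD
  · have hd0 (j : ι) : d j = 0 := sum_eq_zero_iff.1 hD j (mem_univ j)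
    simp only [hd0, zero_add, range_one, sum_singleton, Nat.choose_zero_right,
      prod_const_one] at h
    have hn : n = 0 := by_contra fun hn => h.not_gt (Nat.one_lt_two_pow_iff.2 hn)
    simp [hn, hD]
  obtain ⟨j₀, -, -⟩ := exists_ne_zero_of_sum_ne_zero hD.ne'
  have hm : (1 : ℝ) ≤ Fintype.card ι := by exact_mod_cast Fintype.card_pos_iff.2 ⟨j₀⟩
  rcases le_or_gt n D with hnD | hDn
  · have hnD' : (n : ℝ) ≤ D := by exact_mod_cast hnD
    nlinarith [one_le_mul_log hm, Nat.cast_nonneg (α := ℝ) D]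
  have hdn (j : ι) : d j ≤ n :=
    (single_le_sum (fun _ _ => Nat.zero_le _) (mem_univ j)).trans hDn.le
  have hn : (0 : ℝ) < n := by exact_mod_cast hD.trans hDn
  have hpow : (2 : ℝ) ^ n ≤ (exp 1 * n * Fintype.card ι / D) ^ D :=
    calc (2 : ℝ) ^ n ≤ ∏ j, ∑ i ∈ range (d j + 1), (n.choose i : ℝ) := by exact_mod_cast h
      _ ≤ ∏ j, (exp 1 * n / d j) ^ d j :=
          prod_le_prod (fun _ _ => by positivity) fun j _ =>
            sum_range_choose_le_exp_mul_div_pow (hdn j)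
      _ ≤ _ := prod_div_pow_le d (by positivity)
  refine le_of_mul_log_two_le_mul_log hn (by linarith) (by exact_mod_cast hD) ?_
  rw [← log_pow, ← log_pow]
  exact log_le_log (by positivity) hpow

theorem card_le_of_shattersFam_combination {α ι : Type*} [Fintype ι] (𝒞 : ι → Set (Set α))
    (d : ι → ℕ) (hd : ∀ j, vcDim (𝒞 j) = d j) (P : (ι → Prop) → Prop)
    (φ : (ι → Set α) → Set α) (hφ : ∀ g x, x ∈ φ g ↔ P fun j => x ∈ g j) {S : Finset α}
    (hS : ShattersFam {C | ∃ g : ι → Set α, (∀ j, g j ∈ 𝒞 j) ∧ C = φ g} S) :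
    (#S : ℝ) ≤ exp 1 / ((exp 1 - 1) * log 2) * (∑ j, (d j : ℝ)) *
      log (exp 1 / log 2 * Fintype.card ι) :=
  card_le_of_two_pow_le_prod_sum_choose d <|
    (two_pow_card_le_prod_card_traceOn 𝒞 P φ hφ hS).trans <| prod_le_prod' fun j _ =>
      card_traceOn_le_sum_choose fun _ hs => card_le_of_vcDim_eq (hd j) hs

theorem statement_2_general {α : Type*} {m : ℕ}
    (𝒞 : Fin m → Set (Set α)) (d : Fin m → ℕ)
    (hd : ∀ j, vcDim (𝒞 j) = (d j : ℕ∞)) :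
    (∀ S : Finset α,
        ShattersFam {C | ∃ g : Fin m → Set α, (∀ j, g j ∈ 𝒞 j) ∧ C = ⋂ j, g j} S →
        (S.card : ℝ) ≤ Real.exp 1 / ((Real.exp 1 - 1) * Real.log 2) * (∑ j, (d j : ℝ)) *
          Real.log (Real.exp 1 / Real.log 2 * m)) ∧
    (∀ S : Finset α,
        ShattersFam {C | ∃ g : Fin m → Set α, (∀ j, g j ∈ 𝒞 j) ∧ C = ⋃ j, g j} S →
        (S.card : ℝ) ≤ Real.exp 1 / ((Real.exp 1 - 1) * Real.log 2) * (∑ j, (d j : ℝ)) *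
          Real.log (Real.exp 1 / Real.log 2 * m)) := by
  refine ⟨fun S hS => ?_, fun S hS => ?_⟩
  · simpa using card_le_of_shattersFam_combination 𝒞 d hd (fun p => ∀ j, p j) _
      (fun _ _ => mem_iInter) hS
  · simpa using card_le_of_shattersFam_combination 𝒞 d hd (fun p => ∃ j, p j) _
      (fun _ _ => mem_iUnion) hS

/-- VC dimension of intersections and unions of classes.
If `𝒞_1, …, 𝒞_m` have finite VC dimensions `d_j` and `d = Σ d_j`, then both the
class of `m`-fold intersections and the class of `m`-fold unions have VC dimension
at most `(e/((e−1) log 2)) d log((e/log 2) m)` (stated via shattered sets). -/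
theorem statement_2 {α : Type*} {m : ℕ} (hm : 1 ≤ m)
    (𝒞 : Fin m → Set (Set α)) (d : Fin m → ℕ)
    (hd : ∀ j, vcDim (𝒞 j) = (d j : ℕ∞)) :
    (∀ S : Finset α,
        ShattersFam {C | ∃ g : Fin m → Set α, (∀ j, g j ∈ 𝒞 j) ∧ C = ⋂ j, g j} S →
        (S.card : ℝ) ≤ Real.exp 1 / ((Real.exp 1 - 1) * Real.log 2) * (∑ j, (d j : ℝ)) *
          Real.log (Real.exp 1 / Real.log 2 * m)) ∧
    (∀ S : Finset α,
        ShattersFam {C | ∃ g : Fin m → Set α, (∀ j, g j ∈ 𝒞 j) ∧ C = ⋃ j, g j} S →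
        (S.card : ℝ) ≤ Real.exp 1 / ((Real.exp 1 - 1) * Real.log 2) * (∑ j, (d j : ℝ)) *
          Real.log (Real.exp 1 / Real.log 2 * m)) :=
  statement_2_general 𝒞 d hd
end

section
/- Let 𝒮 be an arbitrary set and let 𝒢 be a finite-dimensional vector space of real-valued functions g : 𝒮 → ℝ (i.e., closed under pointwise addition and scalar multiplication) with dim 𝒢 < +∞. Then the class of sets 𝓗 = { {s ∈ 𝒮 : g(s) ≥ 0} : g ∈ 𝒢 } has VC dimension at most dim 𝒢. -/
open MeasureTheory Real Set

lemma card_le_of_shatters {𝒮 : Type*} (G : Submodule ℝ (𝒮 → ℝ)) [FiniteDimensional ℝ G]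
    (S : Finset 𝒮) (hS : ShattersFam {H : Set 𝒮 | ∃ g ∈ G, H = {s | 0 ≤ g s}} S) :
    S.card ≤ Module.finrank ℝ G := by
  by_contra hlt
  push_neg at hlt
  classical
  set ev : G →ₗ[ℝ] (↥S → ℝ) :=
    (LinearMap.funLeft ℝ ℝ (fun s : ↥S => (s : 𝒮))).comp G.subtype with hev
  have hrange : LinearMap.range ev < ⊤ := by
    rw [lt_top_iff_ne_top]
    intro htop
    have h1 : Module.finrank ℝ (LinearMap.range ev) ≤ Module.finrank ℝ G :=
      ev.finrank_range_le
    rw [htop, finrank_top, Module.finrank_pi, Fintype.card_coe] at h1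
    omega
  obtain ⟨f, hf0, hfbot⟩ := (LinearMap.range ev).exists_dual_map_eq_bot_of_lt_top hrange
    inferInstance
  have hfvan : ∀ g : G, f (ev g) = 0 := by
    intro g
    have : f (ev g) ∈ Submodule.map f (LinearMap.range ev) :=
      Submodule.mem_map_of_mem (LinearMap.mem_range_self ev g)
    rw [hfbot] at this
    simpa using this
  -- key combinatorial step
  have key : ∀ c : ↥S → ℝ, (∀ g : G, ∑ s, c s * (g : 𝒮 → ℝ) s.val = 0) →
      (∃ s, c s < 0) → False := by
    rintro c hsum ⟨s₀, hs₀⟩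
    set D : Finset 𝒮 := (S.attach.filter (fun s => 0 < c s)).image Subtype.val with hD
    have hDsub : D ⊆ S := by
      intro x hx
      simp only [hD, Finset.mem_image, Finset.mem_filter] at hx
      obtain ⟨t, _, ht⟩ := hx
      exact ht ▸ t.2
    obtain ⟨C, hCmem, hDC, hdisj⟩ := hS D hDsub
    obtain ⟨g, hg, hC⟩ := hCmem
    -- membership characterizations
    have hmemD : ∀ s : ↥S, (s : 𝒮) ∈ D ↔ 0 < c s := by
      intro s
      simp only [hD, Finset.mem_image, Finset.mem_filter, Finset.mem_attach, true_and]
      constructor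
      · rintro ⟨t, ht, hts⟩
        rwa [Subtype.ext hts] at ht
      · exact fun h => ⟨s, h, rfl⟩
    have hterm : ∀ s : ↥S, 0 ≤ c s * g s.val := by
      intro s
      by_cases hcs : 0 < c s
      · have : (s : 𝒮) ∈ C := hDC (by exact_mod_cast (hmemD s).mpr hcs)
        rw [hC] at this
        exact mul_nonneg hcs.le this
      · have hnotD : (s : 𝒮) ∉ D := fun h => hcs ((hmemD s).mp h)
        have hmem : (s : 𝒮) ∈ ((S : Set 𝒮) \ (D : Set 𝒮)) := ⟨s.2, by exact_mod_cast hnotD⟩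
        have hnotC : (s : 𝒮) ∉ C := by
          intro hc
          have : (s : 𝒮) ∈ ((S : Set 𝒮) \ (D : Set 𝒮)) ∩ C := ⟨hmem, hc⟩
          rw [hdisj] at this
          exact this
        rw [hC] at hnotC
        have hg' : g s.val < 0 := lt_of_not_ge hnotC
        push_neg at hcs
        exact mul_nonneg_of_nonpos_of_nonpos hcs hg'.le
    have hpos : 0 < c s₀ * g s₀.val := by
      have hnotD : (s₀ : 𝒮) ∉ D := fun h => absurd ((hmemD s₀).mp h) (not_lt.mpr hs₀.le)
      have hmem : (s₀ : 𝒮) ∈ ((S : Set 𝒮) \ (D : Set 𝒮)) := ⟨s₀.2, by exact_mod_cast hnotD⟩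
      have hnotC : (s₀ : 𝒮) ∉ C := by
        intro hc
        have : (s₀ : 𝒮) ∈ ((S : Set 𝒮) \ (D : Set 𝒮)) ∩ C := ⟨hmem, hc⟩
        rw [hdisj] at this
        exact this
      rw [hC] at hnotC
      exact mul_pos_of_neg_of_neg hs₀ (lt_of_not_ge hnotC)
    have : (0:ℝ) < ∑ s, c s * (⟨g, hg⟩ : G).val s.val :=
      Finset.sum_pos' (fun s _ => hterm s) ⟨s₀, Finset.mem_univ _, hpos⟩
    rw [hsum ⟨g, hg⟩] at this
    exact lt_irrefl _ this
  -- build c from f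
  set c : ↥S → ℝ := fun s => f (fun j => if s = j then 1 else 0) with hc
  have hrepr : ∀ y : ↥S → ℝ, f y = ∑ s, y s * c s := by
    intro y
    conv_lhs => rw [pi_eq_sum_univ y]
    rw [map_sum]
    simp [hc, smul_eq_mul]
  have hcsum : ∀ g : G, ∑ s, c s * (g : 𝒮 → ℝ) s.val = 0 := by
    intro g
    have := hfvan g
    rw [hrepr (ev g)] at this
    simpa [hev, mul_comm, LinearMap.funLeft] using this
  have hcne : ∃ s, c s ≠ 0 := by
    by_contra hall
    push_neg at hall
    apply hf0
    apply LinearMap.ext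
    intro y
    rw [hrepr y]
    simp [hall]
  obtain ⟨s₀, hs₀⟩ := hcne
  rcases lt_or_gt_of_ne hs₀ with h | h
  · exact key c hcsum ⟨s₀, h⟩
  · refine key (-c) (fun g => ?_) ⟨s₀, by simpa using h⟩
    simpa [neg_mul] using congrArg Neg.neg (hcsum g)

/-- Dudley's lemma.
If `𝒢` is a finite-dimensional vector space of real-valued functions on `𝒮`, then the
class `{ {s : g(s) ≥ 0} : g ∈ 𝒢 }` has VC dimension at most `dim 𝒢`. -/
theorem statement_3 {𝒮 : Type*} (G : Submodule ℝ (𝒮 → ℝ)) [FiniteDimensional ℝ G] :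
    vcDim {H : Set 𝒮 | ∃ g ∈ G, H = {s | 0 ≤ g s}} ≤ (Module.finrank ℝ G : ℕ∞) := by
  refine iSup₂_le fun S hSh => ?_
  exact_mod_cast card_le_of_shatters G S hSh
end

section
/- Let d ≥ 1 and d_0 ≤ d be positive integers, and let 𝒰 = { {(y,z) ∈ ℝ^d × ℝ : yᵀx ≤ z} : x ∈ ℝ^d, ‖x‖₀ ≤ d_0 }, where ‖x‖₀ denotes the number of nonzero entries of x. Then d_VC( 𝒰 ∪ {ℝ^d × ℝ} ) ≤ 2(d_0 + 1)·log₂( (d·e + e)/(d_0 + 1) ). -/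
open MeasureTheory Real Set

/-- The linear functional `(y, z) ↦ ∑ i, y i * x i - z`. -/
noncomputable def phiGen {ι : Type*} [Fintype ι] (x : ι → ℝ) : ((ι → ℝ) × ℝ) →ₗ[ℝ] ℝ where
  toFun p := ∑ i, p.1 i * x i - p.2
  map_add' p q := by
    simp only [Prod.fst_add, Prod.snd_add, Pi.add_apply, add_mul, Finset.sum_add_distrib]
    ring
  map_smul' c p := by
    simp only [Prod.smul_fst, Prod.smul_snd, Pi.smul_apply, smul_eq_mul, RingHom.id_apply,
      Finset.mul_sum]
    ring_nf
    rw [Finset.mul_sum]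
    ring_nf

/-- Sign argument: if every subset of `B` can be cut out by a linear functional,
then `B.card ≤ finrank`. -/
lemma signArg {α W : Type*} [DecidableEq α] [AddCommGroup W] [Module ℝ W] [FiniteDimensional ℝ W]
    (B : Finset α) (v : α → W)
    (h : ∀ B' ⊆ B, ∃ φ : W →ₗ[ℝ] ℝ,
      (∀ p ∈ B', φ (v p) ≤ 0) ∧ (∀ p ∈ B \ B', 0 < φ (v p))) :
    B.card ≤ Module.finrank ℝ W := by
  by_contra hlt
  push_neg at hlt
  have hnli : ¬ LinearIndependent ℝ (fun j : ↥B => v j) := by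
    intro hli
    have := hli.fintype_card_le_finrank
    simp only [Fintype.card_coe] at this
    omega
  rw [Fintype.not_linearIndependent_iff] at hnli
  obtain ⟨g, hsum, j₀, hj₀⟩ := hnli
  -- wlog g j₀ > 0
  obtain ⟨g, hsum, j₀, hj₀⟩ :
      ∃ g : ↥B → ℝ, ∑ j : ↥B, g j • v j = 0 ∧ ∃ j₀, 0 < g j₀ := by
    rcases lt_or_gt_of_ne hj₀ with hneg | hpos
    · refine ⟨fun j => -(g j), ?_, j₀, by simp only []; linarith⟩
      simp only [neg_smul, Finset.sum_neg_distrib, hsum, neg_zero]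
    · exact ⟨g, hsum, j₀, hpos⟩
  set G : α → ℝ := fun p => if hp : p ∈ B then g ⟨p, hp⟩ else 0 with hG
  have hGmem : ∀ (j : ↥B), G (j : α) = g j := fun j => dif_pos j.2
  have hsumG : ∑ p ∈ B, G p • v p = 0 := by
    rw [← Finset.sum_coe_sort B (fun p => G p • v p)]
    simpa only [hGmem] using hsum
  have key : ∀ B' ⊆ B, ∃ φ : W →ₗ[ℝ] ℝ,
      (∀ p ∈ B', φ (v p) ≤ 0) ∧ (∀ p ∈ B \ B', 0 < φ (v p)) ∧
      ∑ p ∈ B, G p * φ (v p) = 0 := by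
    intro B' hB'
    obtain ⟨φ, h1, h2⟩ := h B' hB'
    refine ⟨φ, h1, h2, ?_⟩
    have : φ (∑ p ∈ B, G p • v p) = 0 := by rw [hsumG, map_zero]
    simpa only [map_sum, _root_.map_smul, smul_eq_mul] using this
  by_cases hall : ∀ p ∈ B, 0 ≤ G p
  · obtain ⟨φ, -, h2, h3⟩ := key ∅ (Finset.empty_subset B)
    have hpos : 0 < ∑ p ∈ B, G p * φ (v p) := by
      refine Finset.sum_pos' (fun p hp => ?_) ⟨(j₀ : α), j₀.2, ?_⟩
      · exact mul_nonneg (hall p hp) (le_of_lt (h2 p (by simpa using hp)))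
      · exact mul_pos (by rw [hGmem]; exact hj₀) (h2 _ (by simpa using j₀.2))
    rw [h3] at hpos; exact lt_irrefl 0 hpos
  · push_neg at hall
    obtain ⟨p₁, hp₁B, hp₁⟩ := hall
    obtain ⟨φ, h1, h2, h3⟩ := key (B.filter (fun p => 0 < G p)) (Finset.filter_subset _ _)
    have hneg : ∑ p ∈ B, G p * φ (v p) < ∑ p ∈ B, (0 : ℝ) := by
      refine Finset.sum_lt_sum (fun p hp => ?_) ⟨p₁, hp₁B, ?_⟩
      · by_cases hpf : p ∈ B.filter (fun p => 0 < G p)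
        · exact mul_nonpos_of_nonneg_of_nonpos
            (le_of_lt (Finset.mem_filter.1 hpf).2) (h1 p hpf)
        · have hGp : G p ≤ 0 := by
            by_contra hc; push_neg at hc; exact hpf (Finset.mem_filter.2 ⟨hp, hc⟩)
          exact mul_nonpos_of_nonpos_of_nonneg hGp
            (le_of_lt (h2 p (Finset.mem_sdiff.2 ⟨hp, hpf⟩)))
      · have hp₁f : p₁ ∉ B.filter (fun p => 0 < G p) := by
          simp only [Finset.mem_filter, not_and]; intro _; linarith
        exact mul_neg_of_neg_of_pos hp₁ (h2 p₁ (Finset.mem_sdiff.2 ⟨hp₁B, hp₁f⟩))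
    rw [h3, Finset.sum_const, smul_zero] at hneg
    exact lt_irrefl 0 hneg

lemma L1 : ∀ k : ℕ, (k : ℝ) ^ k ≤ Real.exp 1 ^ k * (Nat.factorial k : ℝ) := by
  intro k
  induction k with
  | zero => simp
  | succ k ih =>
    rcases Nat.eq_zero_or_pos k with rfl | hk
    · simpa using (by linarith [Real.add_one_le_exp (1:ℝ)] : (1:ℝ) ≤ Real.exp 1)
    have hk0 : (0:ℝ) < k := by exact_mod_cast hk
    have hstep : ((k:ℝ) + 1) ^ k ≤ Real.exp 1 * (k:ℝ) ^ k := by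
      have h1 : (k:ℝ) + 1 ≤ (k:ℝ) * Real.exp (1 / k) := by
        have := Real.add_one_le_exp (1 / (k:ℝ))
        calc (k:ℝ) + 1 = (k:ℝ) * (1 / k + 1) := by field_simp; ring
          _ ≤ (k:ℝ) * Real.exp (1 / k) := mul_le_mul_of_nonneg_left this hk0.le
      calc ((k:ℝ) + 1) ^ k ≤ ((k:ℝ) * Real.exp (1 / k)) ^ k := by
            apply pow_le_pow_left₀ (by positivity) h1
        _ = (k:ℝ) ^ k * Real.exp (1 / k) ^ k := mul_pow _ _ _
        _ = (k:ℝ) ^ k * Real.exp ((k:ℕ) * (1 / k)) := by rw [Real.exp_nat_mul]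
        _ = Real.exp 1 * (k:ℝ) ^ k := by
            rw [mul_one_div, div_self (ne_of_gt hk0)]; ring
    have hfac : (Nat.factorial (k+1) : ℝ) = ((k:ℝ)+1) * (Nat.factorial k : ℝ) := by
      rw [Nat.factorial_succ]; push_cast; ring
    calc ((k+1 : ℕ) : ℝ) ^ (k+1) = ((k:ℝ)+1) * ((k:ℝ)+1) ^ k := by push_cast; ring
      _ ≤ ((k:ℝ)+1) * (Real.exp 1 * (k:ℝ) ^ k) :=
          mul_le_mul_of_nonneg_left hstep (by positivity)
      _ ≤ ((k:ℝ)+1) * (Real.exp 1 * (Real.exp 1 ^ k * (Nat.factorial k : ℝ))) := by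
          apply mul_le_mul_of_nonneg_left _ (by positivity)
          exact mul_le_mul_of_nonneg_left ih (le_of_lt (Real.exp_pos 1))
      _ = Real.exp 1 ^ (k+1) * (Nat.factorial (k+1) : ℝ) := by rw [hfac]; ring

lemma L2 (m j : ℕ) (hj : 1 ≤ j) (hjm : j ≤ m) :
    (m.choose j : ℝ) ≤ (Real.exp 1 * m / j) ^ j := by
  have hj0 : (0:ℝ) < j := by exact_mod_cast hj
  have hdesc : (m.descFactorial j : ℝ) = (Nat.factorial j : ℝ) * (m.choose j : ℝ) := by
    exact_mod_cast congrArg (Nat.cast : ℕ → ℝ) (Nat.descFactorial_eq_factorial_mul_choose m j)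
  have hdesc_le : (m.descFactorial j : ℝ) ≤ (m:ℝ) ^ j := by
    exact_mod_cast Nat.descFactorial_le_pow m j
  have key : (m.choose j : ℝ) * (j:ℝ) ^ j ≤ (Real.exp 1 * m) ^ j := by
    calc (m.choose j : ℝ) * (j:ℝ) ^ j
        ≤ (m.choose j : ℝ) * (Real.exp 1 ^ j * (Nat.factorial j : ℝ)) :=
          mul_le_mul_of_nonneg_left (L1 j) (by positivity)
      _ = Real.exp 1 ^ j * ((Nat.factorial j : ℝ) * (m.choose j : ℝ)) := by ring
      _ = Real.exp 1 ^ j * (m.descFactorial j : ℝ) := by rw [hdesc]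
      _ ≤ Real.exp 1 ^ j * (m:ℝ) ^ j :=
          mul_le_mul_of_nonneg_left hdesc_le (by positivity)
      _ = (Real.exp 1 * m) ^ j := (mul_pow _ _ _).symm
  rw [div_pow, le_div_iff₀ (by positivity)]
  exact key

lemma L3 (n k : ℕ) (hk : 1 ≤ k) (hkn : k ≤ n) :
    (∑ i ∈ Finset.range (k+1), (n.choose i : ℝ)) ≤ (Real.exp 1 * n / k) ^ k := by
  have hn : 1 ≤ n := le_trans hk hkn
  have hn0 : (0:ℝ) < n := by exact_mod_cast hn
  have hk0 : (0:ℝ) < k := by exact_mod_cast hk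
  set r : ℝ := (k:ℝ)/(n:ℝ) with hr
  have hr0 : 0 < r := by positivity
  have hr1 : r ≤ 1 := by rw [hr, div_le_one hn0]; exact_mod_cast hkn
  have step1 : (∑ i ∈ Finset.range (k+1), (n.choose i : ℝ)) * r ^ k
      ≤ ∑ i ∈ Finset.range (k+1), (n.choose i : ℝ) * r ^ i := by
    rw [Finset.sum_mul]
    apply Finset.sum_le_sum
    intro i hi
    exact mul_le_mul_of_nonneg_left
      (pow_le_pow_of_le_one hr0.le hr1 (Nat.le_of_lt_succ (Finset.mem_range.1 hi)))
      (by positivity)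
  have step2 : ∑ i ∈ Finset.range (k+1), (n.choose i : ℝ) * r ^ i
      ≤ ∑ i ∈ Finset.range (n+1), (n.choose i : ℝ) * r ^ i := by
    apply Finset.sum_le_sum_of_subset_of_nonneg
    · exact Finset.range_subset_range.2 (by omega)
    · intro i _ _; positivity
  have step3 : ∑ i ∈ Finset.range (n+1), (n.choose i : ℝ) * r ^ i = (r + 1) ^ n := by
    rw [add_pow]
    apply Finset.sum_congr rfl
    intro i _
    rw [one_pow]; ring
  have step4 : (r + 1) ^ n ≤ Real.exp 1 ^ k := by
    calc (r + 1) ^ n ≤ Real.exp r ^ n := by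
          apply pow_le_pow_left₀ (by positivity) (Real.add_one_le_exp r)
      _ = Real.exp ((n:ℕ) * r) := (Real.exp_nat_mul r n).symm
      _ = Real.exp (k:ℝ) := by rw [hr]; field_simp
      _ = Real.exp 1 ^ k := by rw [← Real.exp_nat_mul]; norm_num
  have hA : (∑ i ∈ Finset.range (k+1), (n.choose i : ℝ)) * r ^ k ≤ Real.exp 1 ^ k := by
    calc _ ≤ ∑ i ∈ Finset.range (k+1), (n.choose i : ℝ) * r ^ i := step1
      _ ≤ ∑ i ∈ Finset.range (n+1), (n.choose i : ℝ) * r ^ i := step2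
      _ = (r + 1) ^ n := step3
      _ ≤ Real.exp 1 ^ k := step4
  have hfin : (∑ i ∈ Finset.range (k+1), (n.choose i : ℝ)) ≤ Real.exp 1 ^ k / r ^ k := by
    rw [le_div_iff₀ (by positivity)]; exact hA
  calc (∑ i ∈ Finset.range (k+1), (n.choose i : ℝ)) ≤ Real.exp 1 ^ k / r ^ k := hfin
    _ = (Real.exp 1 / r) ^ k := (div_pow _ _ _).symm
    _ = (Real.exp 1 * n / k) ^ k := by
        congr 1
        rw [hr]
        field_simp

lemma arith (d d0 n : ℕ) (hd0 : 1 ≤ d0) (hle : d0 ≤ d) (hn1 : n ≤ d + 1)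
    (h2 : 2 ^ n - 1 ≤ d.choose d0 * ∑ i ∈ Finset.range (d0 + 2), n.choose i) :
    (n : ℝ) ≤ 2 * (d0 + 1) * Real.logb 2 ((d * Real.exp 1 + Real.exp 1) / (d0 + 1)) := by
  set k : ℕ := d0 + 1 with hkdef
  have hk1 : 1 ≤ k := by omega
  have hk0 : (0:ℝ) < k := by exact_mod_cast hk1
  have hkd : k ≤ d + 1 := by omega
  set M : ℝ := Real.exp 1 * ((d:ℝ) + 1) / k with hMdef
  have he1 : (2:ℝ) ≤ Real.exp 1 := by linarith [Real.add_one_le_exp (1:ℝ)]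
  have hMrw : ((d:ℝ) * Real.exp 1 + Real.exp 1) / ((d0:ℝ) + 1) = M := by
    rw [hMdef, hkdef]; push_cast; ring
  have hM_ge_e : Real.exp 1 ≤ M := by
    rw [hMdef, le_div_iff₀ hk0]
    have : (k:ℝ) ≤ (d:ℝ) + 1 := by exact_mod_cast hkd
    nlinarith [Real.exp_pos 1]
  have hM0 : 0 < M := lt_of_lt_of_le (by linarith) hM_ge_e
  have hL1 : 1 ≤ Real.logb 2 M := by
    rw [show (1:ℝ) = Real.logb 2 2 from (Real.logb_self_eq_one one_lt_two).symm]
    exact Real.logb_le_logb_of_le one_lt_two two_pos (by linarith)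
  have hgoal_rw : 2 * ((d0:ℝ) + 1) * Real.logb 2 (((d:ℝ) * Real.exp 1 + Real.exp 1) / ((d0:ℝ) + 1))
      = 2 * (k:ℝ) * Real.logb 2 M := by
    rw [hMrw, hkdef]; push_cast; ring
  rw [hgoal_rw]
  by_cases hcase : n ≤ 2 * k ∨ d + 1 ≤ 2 * k
  · have hn2k : (n:ℝ) ≤ 2 * (k:ℝ) := by
      rcases hcase with h | h
      · exact_mod_cast h
      · exact_mod_cast le_trans hn1 h
    nlinarith
  push_neg at hcase
  obtain ⟨hn2k, hd2k⟩ := hcase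
  -- hard case
  have h2e_le_M : 2 * Real.exp 1 ≤ M := by
    rw [hMdef, le_div_iff₀ hk0]
    have : 2 * (k:ℝ) ≤ (d:ℝ) + 1 := by exact_mod_cast le_of_lt hd2k
    nlinarith [Real.exp_pos 1]
  -- the power inequality, in ℝ
  have hpow : (2:ℝ) ^ (n - 1) ≤ (d.choose d0 : ℝ) * ∑ i ∈ Finset.range (k + 1), (n.choose i : ℝ) := by
    have h1 : (2:ℕ) ^ (n-1) ≤ 2 ^ n - 1 := by
      have hn1' : 1 ≤ n := by omega
      have : 2 ^ n = 2 * 2 ^ (n-1) := by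
        rw [← pow_succ']
        congr 1
        omega
      have h2pos : 1 ≤ 2 ^ (n-1) := Nat.one_le_two_pow
      omega
    have h3 : (2:ℕ) ^ (n-1) ≤ d.choose d0 * ∑ i ∈ Finset.range (d0 + 2), n.choose i :=
      le_trans h1 h2
    have := (Nat.cast_le (α := ℝ)).2 h3
    push_cast at this
    convert this using 3
  have hsum_le : (∑ i ∈ Finset.range (k + 1), (n.choose i : ℝ)) ≤ M ^ k := by
    calc (∑ i ∈ Finset.range (k + 1), (n.choose i : ℝ))
        ≤ (Real.exp 1 * n / k) ^ k := L3 n k hk1 (by omega)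
      _ ≤ M ^ k := by
          have hnd : (n:ℝ) ≤ (d:ℝ) + 1 := by exact_mod_cast hn1
          apply pow_le_pow_left₀ (by positivity)
          rw [hMdef]
          gcongr
  have hchoose_le : (d.choose d0 : ℝ) ≤ Real.exp 1 * M ^ (k-1) := by
    have hid : ((d:ℝ)+1) * (d.choose d0 : ℝ) = ((d+1).choose k : ℝ) * (k:ℝ) := by
      exact_mod_cast congrArg (Nat.cast : ℕ → ℝ) (Nat.add_one_mul_choose_eq d d0)
    have hck : ((d+1).choose k : ℝ) ≤ M ^ k := by
      have h := L2 (d+1) k hk1 hkd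
      rw [hMdef]
      push_cast at h ⊢
      exact h
    have hd1 : (0:ℝ) < (d:ℝ) + 1 := by positivity
    have heq : (d.choose d0 : ℝ) = ((d+1).choose k : ℝ) * (k:ℝ) / ((d:ℝ)+1) := by
      field_simp
      linarith [hid]
    rw [heq]
    calc ((d+1).choose k : ℝ) * (k:ℝ) / ((d:ℝ)+1) ≤ M ^ k * (k:ℝ) / ((d:ℝ)+1) := by gcongr
      _ = Real.exp 1 * M ^ (k-1) := by
          have hMk : M ^ k = M ^ (k-1) * M := by
            conv_lhs => rw [show k = (k-1)+1 by omega]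
            rw [pow_succ]
          rw [hMk, hMdef]
          field_simp
  have hmain : (2:ℝ) ^ (n-1) ≤ Real.exp 1 * M ^ (2*k-1) := by
    have hsum_nonneg : (0:ℝ) ≤ ∑ i ∈ Finset.range (k + 1), (n.choose i : ℝ) := by positivity
    calc (2:ℝ)^(n-1) ≤ (d.choose d0 : ℝ) * ∑ i ∈ Finset.range (k + 1), (n.choose i : ℝ) := hpow
      _ ≤ (Real.exp 1 * M^(k-1)) * M^k :=
          mul_le_mul hchoose_le hsum_le hsum_nonneg (by positivity)
      _ = Real.exp 1 * M^(2*k-1) := by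
          rw [mul_assoc, ← pow_add]
          congr 2
          omega
  have hlog := Real.logb_le_logb_of_le one_lt_two
    (by positivity : (0:ℝ) < 2 ^ (n-1)) hmain
  have hlhs : Real.logb 2 ((2:ℝ) ^ (n-1)) = ((n:ℝ) - 1) := by
    rw [Real.logb_pow, Real.logb_self_eq_one one_lt_two, mul_one]
    have : (1:ℕ) ≤ n := by omega
    push_cast [Nat.cast_sub this]
    ring
  have hrhs : Real.logb 2 (Real.exp 1 * M ^ (2*k-1))
      = Real.logb 2 (Real.exp 1) + (2*(k:ℝ) - 1) * Real.logb 2 M := by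
    rw [Real.logb_mul (by positivity) (by positivity), Real.logb_pow]
    have : ((2*k-1 : ℕ) : ℝ) = 2*(k:ℝ) - 1 := by
      have : (1:ℕ) ≤ 2*k := by omega
      push_cast [Nat.cast_sub this]
      ring
    rw [this]
  have hloge : Real.logb 2 (Real.exp 1) ≤ Real.logb 2 M - 1 := by
    have h1 : Real.logb 2 (2 * Real.exp 1) ≤ Real.logb 2 M :=
      Real.logb_le_logb_of_le one_lt_two (by positivity) h2e_le_M
    rw [Real.logb_mul (by norm_num) (by positivity),
      Real.logb_self_eq_one one_lt_two] at h1
    linarith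
  rw [hlhs, hrhs] at hlog
  nlinarith [hL1]

/-- VC dimension of sparse linear classifiers.
For positive integers `d₀ ≤ d`, the class
`𝒰 = { {(y,z) : yᵀx ≤ z} : x ∈ ℝ^d, ‖x‖₀ ≤ d₀ } ∪ {ℝ^d × ℝ}` has VC dimension at most
`2(d₀+1) log₂((d e + e)/(d₀+1))` (stated via shattered sets). -/
theorem statement_5 (d d0 : ℕ) (hd : 1 ≤ d) (hd0 : 1 ≤ d0) (hle : d0 ≤ d) :
    ∀ S : Finset ((Fin d → ℝ) × ℝ),
      ShattersFam
        ({U | ∃ x : Fin d → ℝ, {i | x i ≠ 0}.ncard ≤ d0 ∧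
            U = {p : (Fin d → ℝ) × ℝ | ∑ i, p.1 i * x i ≤ p.2}} ∪ {Set.univ}) S →
      (S.card : ℝ) ≤
        2 * (d0 + 1) * Real.logb 2 ((d * Real.exp 1 + Real.exp 1) / (d0 + 1)) := by
  classical
  intro S hS
  set n := S.card with hn
  -- Step 1: n ≤ d + 1
  have hfr : Module.finrank ℝ ((Fin d → ℝ) × ℝ) = d + 1 := by
    simp [Module.finrank_prod, Module.finrank_pi]
  have hn1 : n ≤ d + 1 := by
    rw [hn, ← hfr]
    apply signArg S (fun p => p)
    intro B' hB'
    obtain ⟨C, hC, hsub, hdisj⟩ := hS B' hB'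
    rcases hC with ⟨x, -, rfl⟩ | hC
    · refine ⟨phiGen x, fun p hp => ?_, fun p hp => ?_⟩
      · have : p ∈ {p : (Fin d → ℝ) × ℝ | ∑ i, p.1 i * x i ≤ p.2} := hsub (by exact_mod_cast hp)
        simpa [phiGen, sub_nonpos] using this
      · rw [Finset.mem_sdiff] at hp
        have hpmem : p ∈ ((S : Set _) \ (B' : Set _)) := ⟨hp.1, hp.2⟩
        have : p ∉ {p : (Fin d → ℝ) × ℝ | ∑ i, p.1 i * x i ≤ p.2} := fun hc =>
          (Set.eq_empty_iff_forall_notMem.1 hdisj p) (Set.mem_inter hpmem hc)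
        simp only [Set.mem_setOf_eq, not_le] at this
        simpa [phiGen, sub_pos] using this
    · simp only [Set.mem_singleton_iff] at hC
      subst hC
      rw [Set.inter_univ] at hdisj
      refine ⟨0, by simp, fun p hp => ?_⟩
      rw [Finset.mem_sdiff] at hp
      have hpm : p ∈ (S : Set ((Fin d → ℝ) × ℝ)) \ ↑B' := ⟨by exact_mod_cast hp.1,
        by simpa using hp.2⟩
      exact (Set.eq_empty_iff_forall_notMem.1 hdisj p hpm).elim
  -- Step 2: choice of sparse separators for proper subsets
  have hchoice : ∀ D ∈ S.powerset.erase S, ∃ x : Fin d → ℝ,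
      {i | x i ≠ 0}.ncard ≤ d0 ∧ (∀ p ∈ D, ∑ i, p.1 i * x i ≤ p.2) ∧
      (∀ p ∈ S, p ∉ D → ¬(∑ i, p.1 i * x i ≤ p.2)) := by
    intro D hD
    rw [Finset.mem_erase, Finset.mem_powerset] at hD
    obtain ⟨C, hC, hsub, hdisj⟩ := hS D hD.2
    rcases hC with ⟨x, hx, rfl⟩ | hC
    · refine ⟨x, hx, fun p hp => hsub (by exact_mod_cast hp), fun p hp hpD hc => ?_⟩
      have hpm : p ∈ (S : Set ((Fin d → ℝ) × ℝ)) \ ↑D := ⟨by exact_mod_cast hp,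
        by simpa using hpD⟩
      exact (Set.eq_empty_iff_forall_notMem.1 hdisj p) (Set.mem_inter hpm hc)
    · simp only [Set.mem_singleton_iff] at hC
      subst hC
      rw [Set.inter_univ] at hdisj
      exfalso
      apply hD.1
      apply Finset.Subset.antisymm hD.2
      intro p hp
      by_contra hpD
      have hpm : p ∈ (S : Set ((Fin d → ℝ) × ℝ)) \ ↑D := ⟨by exact_mod_cast hp,
        by simpa using hpD⟩
      exact (Set.eq_empty_iff_forall_notMem.1 hdisj p) hpm
  choose! xD hxD hxD2 hxD3 using hchoice
  -- Step 3: choose supports of size d0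
  have hTchoice : ∀ D ∈ S.powerset.erase S, ∃ T : Finset (Fin d),
      (∀ i, xD D i ≠ 0 → i ∈ T) ∧ T.card = d0 := by
    intro D hD
    have hfin : {i | xD D i ≠ 0}.Finite := Set.toFinite _
    have hcard : hfin.toFinset.card ≤ d0 := by
      rw [← Set.ncard_eq_toFinset_card _ hfin]
      exact hxD D hD
    obtain ⟨T, hT1, hT2⟩ := Finset.exists_superset_card_eq hcard (by simpa using hle)
    exact ⟨T, fun i hi => hT1 (by simpa using hi), hT2⟩
  choose! TD hTD1 hTD2 using hTchoice
  -- Step 4: counting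
  have hcount : 2 ^ n - 1 ≤ d.choose d0 * ∑ i ∈ Finset.range (d0 + 2), n.choose i := by
    have hcardP : (S.powerset.erase S).card = 2 ^ n - 1 := by
      rw [Finset.card_erase_of_mem (Finset.mem_powerset_self S), Finset.card_powerset]
    rw [← hcardP]
    rw [Finset.card_eq_sum_card_fiberwise
      (f := TD) (t := Finset.univ.powersetCard d0)
      (fun D hD => Finset.mem_powersetCard_univ.2 (hTD2 D hD))]
    have hfiber : ∀ T ∈ Finset.univ.powersetCard d0,
        ((S.powerset.erase S).filter (fun D => TD D = T)).card ≤
          ∑ i ∈ Finset.range (d0 + 2), n.choose i := by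
      intro T hT
      set 𝒜 := (S.powerset.erase S).filter (fun D => TD D = T) with h𝒜
      have hSauer := Finset.card_le_card_shatterer 𝒜
      have hsub : 𝒜.shatterer ⊆ (Finset.range (d0+2)).biUnion (fun i => S.powersetCard i) := by
        intro B hB
        rw [Finset.mem_shatterer] at hB
        -- B ⊆ S
        obtain ⟨u, hu, huB⟩ := hB (Finset.Subset.refl B)
        have huP : u ∈ S.powerset.erase S ∧ TD u = T := by
          have := Finset.mem_filter.1 hu; exact ⟨this.1, this.2⟩
        have hBS : B ⊆ S := by
          intro p hp
          have hpu : p ∈ u := by rw [← huB] at hp; exact (Finset.mem_inter.1 hp).2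
          exact Finset.mem_powerset.1 (Finset.mem_erase.1 huP.1).2 hpu
        -- B.card ≤ d0 + 1 via signArg in dimension T.card + 1
        have hBcard : B.card ≤ d0 + 1 := by
          have hfrT : Module.finrank ℝ (({i : Fin d // i ∈ T} → ℝ) × ℝ) = d0 + 1 := by
            simp [Module.finrank_prod, Module.finrank_pi, Finset.mem_powersetCard_univ.1 hT]
          rw [← hfrT]
          apply signArg B (fun p => ((fun i : {i : Fin d // i ∈ T} => p.1 i), p.2))
          intro B' hB'
          obtain ⟨u', hu', hu'B⟩ := hB hB'
          have hu'f := Finset.mem_filter.1 hu'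
          set x := xD u' with hx
          have hsupp : ∀ i, x i ≠ 0 → i ∈ T := by
            rw [← hu'f.2]; exact hTD1 u' hu'f.1
          have hkey : ∀ p : (Fin d → ℝ) × ℝ,
              (phiGen (fun i : {i : Fin d // i ∈ T} => x i))
                ((fun i : {i : Fin d // i ∈ T} => p.1 i), p.2)
              = ∑ i, p.1 i * x i - p.2 := by
            intro p
            have h1 : ∑ i : {i : Fin d // i ∈ T}, p.1 ↑i * x ↑i
                = ∑ i ∈ T, p.1 i * x i := Finset.sum_coe_sort T (fun i => p.1 i * x i)
            have h2 : ∑ i ∈ T, p.1 i * x i = ∑ i, p.1 i * x i := by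
              apply Finset.sum_subset (Finset.subset_univ T)
              intro i _ hiT
              have : x i = 0 := by by_contra hc; exact hiT (hsupp i hc)
              simp [this]
            simp only [phiGen, LinearMap.coe_mk, AddHom.coe_mk]
            rw [h1, h2]
          refine ⟨phiGen (fun i : {i : Fin d // i ∈ T} => x i), ?_, ?_⟩
          · intro p hp
            rw [hkey, sub_nonpos]
            apply hxD2 u' hu'f.1
            rw [← hu'B] at hp; exact (Finset.mem_inter.1 hp).2
          · intro p hp
            rw [Finset.mem_sdiff] at hp
            rw [hkey, sub_pos]
            rcases lt_or_ge p.2 (∑ i, p.1 i * x i) with h | h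
            · exact h
            · exfalso
              apply hxD3 u' hu'f.1 p (hBS hp.1) _ h
              intro hpu'
              exact hp.2 (by rw [← hu'B]; exact Finset.mem_inter.2 ⟨hp.1, hpu'⟩)
        rw [Finset.mem_biUnion]
        exact ⟨B.card, Finset.mem_range.2 (by omega),
          Finset.mem_powersetCard.2 ⟨hBS, rfl⟩⟩
      calc 𝒜.card ≤ 𝒜.shatterer.card := hSauer
        _ ≤ ((Finset.range (d0+2)).biUnion (fun i => S.powersetCard i)).card :=
            Finset.card_le_card hsub
        _ ≤ ∑ i ∈ Finset.range (d0+2), (S.powersetCard i).card := Finset.card_biUnion_le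
        _ = ∑ i ∈ Finset.range (d0+2), n.choose i := by
            simp [Finset.card_powersetCard, hn]
    calc ∑ T ∈ Finset.univ.powersetCard d0,
          ((S.powerset.erase S).filter (fun D => TD D = T)).card
        ≤ ∑ T ∈ Finset.univ.powersetCard d0, ∑ i ∈ Finset.range (d0+2), n.choose i :=
          Finset.sum_le_sum hfiber
      _ = d.choose d0 * ∑ i ∈ Finset.range (d0+2), n.choose i := by
          rw [Finset.sum_const, smul_eq_mul, Finset.card_powersetCard, Finset.card_univ,
            Fintype.card_fin]
  exact arith d d0 n hd0 hle hn1 hcount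
end

section
/- If the collection of domains dom f_ξ = {x ∈ 𝒳 : f(ξ,x) < +∞}, ξ ∈ Ξ, forms a chain-constrained domain of order m, then the class 𝓗 = {H_x}_{x∈𝒳} ∪ {Ξ}, where H_x = {ξ ∈ Ξ : f(ξ,x) < +∞}, satisfies d_VC(𝓗) ≤ (e/((e−1)·log 2)) · m · log( (e/log 2) · m ). -/
/-!
On a finite set `S` of size `n`, the trace of each `H_x` is the intersection of the traces of
`m` chains, and the trace of a chain on `S` is determined by its cardinality in `{0, …, n}`;
`Ξ` itself is the intersection of the top elements `univ` adjoined to each chain. Hence `𝓗`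
leaves at most `(n + 1) ^ m` traces on `S`, and shattering forces `2 ^ n ≤ (n + 1) ^ m`.
Bounding `log (n + 1)` by the tangent line of `log` at `e m / log 2` turns this into the
stated estimate.
-/

open MeasureTheory Real Set

section Traces

open Finset
open scoped Classical

variable {α : Type*}

theorem Finset.filter_mem_eq_of_card_eq (S : Finset α) {A B : Set α} (hAB : A ⊆ B ∨ B ⊆ A)
    (hcard : #(S.filter (· ∈ A)) = #(S.filter (· ∈ B))) :
    S.filter (· ∈ A) = S.filter (· ∈ B) := by
  rcases hAB with h | h
  · exact eq_of_subset_of_card_le (monotone_filter_right S fun a _ ha => h ha) hcard.ge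
  · exact (eq_of_subset_of_card_le (monotone_filter_right S fun a _ ha => h ha) hcard.le).symm

theorem card_le_of_forall_eq_filter_iInter {m : ℕ} {𝒱 : Fin m → Set (Set α)}
    (h𝒱 : ∀ k, IsChain (· ⊆ ·) (𝒱 k)) (S : Finset α) (𝒟 : Finset (Finset α))
    (h𝒟 : ∀ D ∈ 𝒟, ∃ V : Fin m → Set α, (∀ k, V k ∈ 𝒱 k) ∧ D = S.filter (· ∈ ⋂ k, V k)) :
    #𝒟 ≤ (#S + 1) ^ m := by
  choose! V hV htr using h𝒟
  let size (D : Finset α) (k : Fin m) : ℕ := #(S.filter (· ∈ V D k))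
  have hsize : ∀ D ∈ 𝒟, size D ∈ Fintype.piFinset fun _ => range (#S + 1) := fun D _ =>
    Fintype.mem_piFinset.2 fun k => mem_range_succ_iff.2 (card_filter_le _ _)
  have hinj : Set.InjOn size 𝒟 := by
    intro D hD D' hD' hDD'
    have htrace : ∀ k, S.filter (· ∈ V D k) = S.filter (· ∈ V D' k) := fun k =>
      S.filter_mem_eq_of_card_eq ((h𝒱 k).total (hV D hD k) (hV D' hD' k)) (congrFun hDD' k)
    rw [htr D hD, htr D' hD']
    refine filter_congr fun a ha => ?_
    simp only [Set.mem_iInter]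
    exact forall_congr' fun k => by simpa [ha] using congrArg (a ∈ ·) (htrace k)
  simpa using card_le_card_of_injOn size hsize hinj

theorem ShattersFam.exists_eq_filter {H : Set (Set α)} {S D : Finset α}
    (hS : ShattersFam H S) (hD : D ⊆ S) : ∃ C ∈ H, D = S.filter (· ∈ C) := by
  obtain ⟨C, hC, hDC, hSC⟩ := hS D hD
  refine ⟨C, hC, ext fun a => ⟨fun ha => mem_filter.2 ⟨hD ha, hDC ha⟩, fun ha => ?_⟩⟩
  rw [mem_filter] at ha
  by_contra haD
  exact (Set.eq_empty_iff_forall_notMem.1 hSC) a ⟨⟨ha.1, haD⟩, ha.2⟩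

theorem ShattersFam.two_pow_card_le {m : ℕ} {𝒱 : Fin m → Set (Set α)}
    (h𝒱 : ∀ k, IsChain (· ⊆ ·) (𝒱 k)) {H : Set (Set α)}
    (hH : ∀ C ∈ H, ∃ V : Fin m → Set α, (∀ k, V k ∈ 𝒱 k) ∧ C = ⋂ k, V k) {S : Finset α}
    (hS : ShattersFam H S) : 2 ^ #S ≤ (#S + 1) ^ m := by
  rw [← card_powerset]
  refine card_le_of_forall_eq_filter_iInter h𝒱 S _ fun D hD => ?_
  obtain ⟨C, hC, rfl⟩ := hS.exists_eq_filter (mem_powerset.1 hD)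
  obtain ⟨V, hV, rfl⟩ := hH C hC
  exact ⟨V, hV, rfl⟩

end Traces

theorem isChain_range_setOf_mem {α β : Type*} {U : β → Set α}
    (hU : ∀ b b', U b ⊆ U b' ∨ U b' ⊆ U b) : IsChain (· ⊆ ·) (range fun a => {b | a ∈ U b}) := by
  rintro _ ⟨a, rfl⟩ _ ⟨a', rfl⟩ -
  by_contra! h
  obtain ⟨b, hab, ha'b⟩ := not_subset.1 h.1
  obtain ⟨b', ha'b', hab'⟩ := not_subset.1 h.2
  rcases hU b b' with hbb' | hb'b
  · exact hab' (hbb' hab)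
  · exact ha'b (hb'b ha'b')

theorem Real.log_le_log_add_div_sub_one {a y : ℝ} (ha : 0 < a) (hy : 0 < y) :
    log y ≤ log a + y / a - 1 := by
  have h := log_le_sub_one_of_pos (div_pos hy ha)
  rw [log_div hy.ne' ha.ne'] at h
  linarith

theorem le_of_mul_log_two_le_mul_log_add_one {x m : ℝ} (hx : 0 ≤ x) (hm : 1 ≤ m)
    (h : x * log 2 ≤ m * log (x + 1)) :
    x ≤ exp 1 / ((exp 1 - 1) * log 2) * m * log (exp 1 / log 2 * m) := by
  have hlog2 : 0 < log 2 := log_pos one_lt_two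
  have hlog2_lt : log 2 < exp 1 := (log_two_lt_d9.trans (by norm_num)).trans exp_one_gt_d9
  have he : 0 < exp 1 - 1 := by linarith [add_one_lt_exp one_ne_zero]
  set a := exp 1 / log 2 * m with ha
  have hapos : 0 < a := by positivity
  have htangent := log_le_log_add_div_sub_one hapos (by linarith : 0 < x + 1)
  have hma : m / a = log 2 / exp 1 := by rw [ha]; field_simp
  have h₁ : x * log 2 ≤ m * log a + (x + 1) * (log 2 / exp 1) - m :=
    calc x * log 2 ≤ m * log (x + 1) := h
      _ ≤ m * (log a + (x + 1) / a - 1) := by gcongr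
      _ = m * log a + (x + 1) * (m / a) - m := by ring
      _ = m * log a + (x + 1) * (log 2 / exp 1) - m := by rw [hma]
  have h₂ : x * ((exp 1 - 1) * log 2) ≤ exp 1 * m * log a :=
    calc x * ((exp 1 - 1) * log 2) = exp 1 * (x * log 2) - x * log 2 := by ring
      _ ≤ exp 1 * (m * log a + (x + 1) * (log 2 / exp 1) - m) - x * log 2 := by gcongr
      _ = exp 1 * m * log a + log 2 - exp 1 * m := by field_simp; ring
      _ ≤ exp 1 * m * log a := by linarith [mul_le_mul_of_nonneg_left hm (exp_pos 1).le]
  rw [div_mul_eq_mul_div, div_mul_eq_mul_div, le_div_iff₀ (by positivity)]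
  linarith

/-- VC dimension under a chain-constrained domain.
If the domains `dom f_ξ = {x : f(ξ,x) < +∞}` form a chain-constrained domain of order `m`,
then `𝓗 = {H_x}_{x∈𝒳} ∪ {Ξ}` with `H_x = {ξ : f(ξ,x) < +∞}` satisfies
`d_VC(𝓗) ≤ (e/((e−1) log 2)) m log((e/log 2) m)` (stated via shattered sets). -/
theorem statement_6 {Ξ 𝒳 : Type*} (f : Ξ → 𝒳 → EReal) (m : ℕ) (hm : 1 ≤ m)
    (U : Fin m → Ξ → Set 𝒳)
    (hchain : ∀ k : Fin m, ∀ ξ₁ ξ₂ : Ξ, U k ξ₁ ⊆ U k ξ₂ ∨ U k ξ₂ ⊆ U k ξ₁)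
    (hdom : ∀ ξ : Ξ, {x | f ξ x < ⊤} = ⋂ k : Fin m, U k ξ) :
    ∀ S : Finset Ξ,
      ShattersFam ((Set.range fun x : 𝒳 => {ξ | f ξ x < ⊤}) ∪ {Set.univ}) S →
      (S.card : ℝ) ≤ Real.exp 1 / ((Real.exp 1 - 1) * Real.log 2) * m *
        Real.log (Real.exp 1 / Real.log 2 * m) := by
  intro S hS
  let 𝒱 (k : Fin m) : Set (Set Ξ) := insert univ (range fun x => {ξ | x ∈ U k ξ})
  have h𝒱 : ∀ k, IsChain (· ⊆ ·) (𝒱 k) := fun k =>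
    (isChain_range_setOf_mem (hchain k)).insert fun _ _ _ => Or.inr (subset_univ _)
  have hH : ∀ C ∈ (range fun x : 𝒳 => {ξ | f ξ x < ⊤}) ∪ {univ},
      ∃ V : Fin m → Set Ξ, (∀ k, V k ∈ 𝒱 k) ∧ C = ⋂ k, V k := by
    rintro C (⟨x, rfl⟩ | rfl)
    · refine ⟨fun k => {ξ | x ∈ U k ξ}, fun k => Or.inr ⟨x, rfl⟩, ?_⟩
      ext ξ
      simpa only [mem_iInter, mem_ofPred_eq] using Set.ext_iff.1 (hdom ξ) x
    · exact ⟨fun _ => univ, fun _ => mem_insert _ _, iInter_univ.symm⟩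
  have hcount : (2 : ℝ) ^ S.card ≤ (S.card + 1) ^ m := by exact_mod_cast hS.two_pow_card_le h𝒱 hH
  refine le_of_mul_log_two_le_mul_log_add_one (Nat.cast_nonneg _) (by exact_mod_cast hm) ?_
  rw [← log_pow, ← log_pow]
  exact log_le_log (by positivity) hcount
end

section
/- Under the setting of the main theorem, suppose the decision set 𝒳 is finite, |𝒳| < +∞. Let ξ^[N] = (ξ_1,…,ξ_N) be IID samples from ℙ, and let x⋆(ξ^[N]) ∈ dom F̂_N with probability 1. Then for any 0 < δ, ε < 1, if N ≥ (4/ε)( log₂(|𝒳| + 1) · log(12/ε) + log(2/δ) ), it holds that ℙ^N( V(x⋆(ξ^[N])) > ε ) ≤ δ. -/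
open MeasureTheory Real Set

lemma numeric_aux_stmt10 (c : ℝ) (hc : 1 ≤ c) (ε δ : ℝ) (hε0 : 0 < ε) (hε1 : ε < 1)
    (hδ0 : 0 < δ) (hδ1 : δ < 1) (N : ℕ)
    (hN : (N : ℝ) ≥ 4 / ε * (Real.logb 2 (c + 1) * Real.log (12 / ε) + Real.log (2 / δ))) :
    c * (1 - ε) ^ N ≤ δ := by
  have hlog2 : Real.log 2 < 1 := by
    have := Real.log_two_lt_d9; linarith
  have hlog2pos : (0:ℝ) < Real.log 2 := Real.log_pos one_lt_two
  have hc1 : (1:ℝ) ≤ c + 1 := by linarith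
  have hL0 : 0 ≤ Real.logb 2 (c+1) := Real.logb_nonneg one_lt_two hc1
  have hL : Real.log c ≤ Real.logb 2 (c + 1) := by
    have h1 : Real.log c ≤ Real.log (c+1) := Real.log_le_log (by linarith) (by linarith)
    have h2 : Real.log (c+1) ≤ Real.logb 2 (c+1) := by
      rw [Real.logb, le_div_iff₀ hlog2pos]
      nlinarith [Real.log_nonneg hc1]
    linarith
  have h12 : (1:ℝ) ≤ Real.log (12/ε) := by
    have he : Real.exp 1 < 2.7182818286 := Real.exp_one_lt_d9
    have h12e : Real.exp 1 ≤ 12 / ε := by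
      have h1 : (12:ℝ) ≤ 12/ε := by
        rw [le_div_iff₀ hε0]; nlinarith
      linarith
    calc (1:ℝ) = Real.log (Real.exp 1) := (Real.log_exp 1).symm
    _ ≤ Real.log (12/ε) := Real.log_le_log (Real.exp_pos 1) h12e
  have h2δ : -Real.log δ ≤ Real.log (2/δ) := by
    rw [Real.log_div two_ne_zero (ne_of_gt hδ0)]
    linarith
  have hB0 : 0 ≤ Real.log (2/δ) := Real.log_nonneg (by rw [le_div_iff₀ hδ0]; linarith)
  have hεN : Real.log c - Real.log δ ≤ ε * N := by
    have hmul : ε * (4/ε * (Real.logb 2 (c+1) * Real.log (12/ε) + Real.log (2/δ))) ≤ ε * N :=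
      mul_le_mul_of_nonneg_left hN (le_of_lt hε0)
    have h4 : ε * (4/ε * (Real.logb 2 (c+1) * Real.log (12/ε) + Real.log (2/δ)))
        = 4 * (Real.logb 2 (c+1) * Real.log (12/ε) + Real.log (2/δ)) := by
      field_simp
    rw [h4] at hmul
    have hA : Real.log c ≤ Real.logb 2 (c+1) * Real.log (12/ε) := by
      nlinarith
    have hA0 : 0 ≤ Real.logb 2 (c+1) * Real.log (12/ε) := by positivity
    linarith
  have hpow : (1-ε)^N ≤ Real.exp (-(ε*N)) := by
    have h1 : (1-ε) ≤ Real.exp (-ε) := by linarith [Real.add_one_le_exp (-ε)]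
    calc (1-ε)^N ≤ (Real.exp (-ε))^N := pow_le_pow_left₀ (by linarith) h1 N
    _ = Real.exp (-(ε*N)) := by rw [← Real.exp_nat_mul]; ring_nf
  have hc0 : (0:ℝ) < c := by linarith
  calc c * (1-ε)^N ≤ c * Real.exp (-(ε*N)) := mul_le_mul_of_nonneg_left hpow (le_of_lt hc0)
    _ = Real.exp (Real.log c - ε*N) := by rw [Real.exp_sub, Real.exp_log hc0, Real.exp_neg]; ring
    _ ≤ Real.exp (Real.log δ) := Real.exp_le_exp.mpr (by linarith)
    _ = δ := Real.exp_log hδ0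

/-- Feasibility bound for a finite decision set.
If `𝒳` is finite, then for `N ≥ (4/ε)(log₂(|𝒳|+1) log(12/ε) + log(2/δ))` we have
`ℙ^N(V(x⋆(ξ^[N])) > ε) ≤ δ`. -/
theorem statement_10
    {Ξ : Type*} [MeasurableSpace Ξ] (P : Measure Ξ) [IsProbabilityMeasure P]
    {𝒳 : Type*} [Fintype 𝒳]
    (f : Ξ → 𝒳 → EReal)
    (hmeas : ∀ x : 𝒳, Measurable fun ξ => f ξ x)
    (V : 𝒳 → ℝ) (hV : ∀ x, V x = (P {ξ | f ξ x = ⊤}).toReal)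
    (N : ℕ)
    (domF : (Fin N → Ξ) → Set 𝒳)
    (hdom : ∀ ω, domF ω = ⋂ i : Fin N, {x | f (ω i) x < ⊤})
    (hne : ∀ᵐ ω ∂(Measure.pi fun _ : Fin N => P), (domF ω).Nonempty)
    (xstar : (Fin N → Ξ) → 𝒳)
    (hxstar : ∀ᵐ ω ∂(Measure.pi fun _ : Fin N => P), xstar ω ∈ domF ω)
    (ε δ : ℝ) (hε0 : 0 < ε) (hε1 : ε < 1) (hδ0 : 0 < δ) (hδ1 : δ < 1)
    (hN : (N : ℝ) ≥ 4 / ε *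
      (Real.logb 2 (Fintype.card 𝒳 + 1) * Real.log (12 / ε) + Real.log (2 / δ))) :
    (Measure.pi fun _ : Fin N => P) {ω | ε < V (xstar ω)} ≤ ENNReal.ofReal δ := by
  classical
  set μ : Measure (Fin N → Ξ) := Measure.pi fun _ : Fin N => P with hμ
  -- Ξ is nonempty
  have hΞ : Nonempty Ξ := by
    by_contra h
    rw [not_nonempty_iff] at h
    have h1 : P Set.univ = 1 := measure_univ
    rw [Set.univ_eq_empty_iff.mpr h, measure_empty] at h1
    exact zero_ne_one h1
  have hX : Nonempty 𝒳 := ⟨xstar fun _ => Classical.choice hΞ⟩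
  -- bad sets
  set g : 𝒳 → Set (Fin N → Ξ) := fun x =>
    if ε < V x then Set.pi Set.univ (fun _ : Fin N => {ξ | f ξ x ≠ ⊤}) else ∅ with hg
  have hsub : μ {ω | ε < V (xstar ω)} ≤ μ (⋃ x : 𝒳, g x) := by
    refine measure_mono_ae ?_
    filter_upwards [hxstar] with ω hω
    intro hmem
    refine mem_iUnion.mpr ⟨xstar ω, ?_⟩
    have hmem' : ε < V (xstar ω) := hmem
    rw [hg]
    simp only [if_pos hmem', Set.mem_univ_pi]
    intro i
    rw [hdom ω] at hω
    have := Set.mem_iInter.mp hω i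
    exact (lt_top_iff_ne_top.mp this)
  have hTmeas : ∀ x : 𝒳, MeasurableSet {ξ | f ξ x = ⊤} := fun x =>
    (hmeas x) (measurableSet_singleton ⊤)
  have hgx : ∀ x : 𝒳, μ (g x) ≤ (1 - ENNReal.ofReal ε) ^ N := by
    intro x
    rw [hg]
    by_cases hx : ε < V x
    · simp only [if_pos hx]
      rw [hμ, Measure.pi_pi]
      have hS : P {ξ | f ξ x ≠ ⊤} = 1 - P {ξ | f ξ x = ⊤} := by
        have : {ξ | f ξ x ≠ ⊤} = {ξ | f ξ x = ⊤}ᶜ := rfl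
        rw [this, prob_compl_eq_one_sub (hTmeas x)]
      have hεT : ENNReal.ofReal ε ≤ P {ξ | f ξ x = ⊤} := by
        have hne' : P {ξ | f ξ x = ⊤} ≠ ⊤ := measure_ne_top P _
        have := (ENNReal.ofReal_lt_iff_lt_toReal (le_of_lt hε0) hne').mpr
          (by rw [← hV x]; exact hx)
        exact le_of_lt this
      have hle : P {ξ | f ξ x ≠ ⊤} ≤ 1 - ENNReal.ofReal ε := by
        rw [hS]; exact tsub_le_tsub_left hεT 1
      calc ∏ _i : Fin N, P {ξ | f ξ x ≠ ⊤} = P {ξ | f ξ x ≠ ⊤} ^ N := by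
            rw [Finset.prod_const, Finset.card_univ, Fintype.card_fin]
        _ ≤ (1 - ENNReal.ofReal ε) ^ N := pow_le_pow_left' hle N
    · simp [if_neg hx]
  have hunion : μ (⋃ x : 𝒳, g x) ≤ (Fintype.card 𝒳 : ENNReal) * (1 - ENNReal.ofReal ε) ^ N := by
    calc μ (⋃ x : 𝒳, g x) ≤ ∑ x : 𝒳, μ (g x) := measure_iUnion_fintype_le μ g
      _ ≤ ∑ _x : 𝒳, (1 - ENNReal.ofReal ε) ^ N := Finset.sum_le_sum fun x _ => hgx x
      _ = (Fintype.card 𝒳 : ENNReal) * (1 - ENNReal.ofReal ε) ^ N := by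
          rw [Finset.sum_const, Finset.card_univ, nsmul_eq_mul]
  refine hsub.trans (hunion.trans ?_)
  have h1ε : (1 : ENNReal) - ENNReal.ofReal ε = ENNReal.ofReal (1 - ε) := by
    rw [ENNReal.ofReal_sub 1 (le_of_lt hε0), ENNReal.ofReal_one]
  rw [h1ε, ← ENNReal.ofReal_pow (by linarith), ← ENNReal.ofReal_natCast,
    ← ENNReal.ofReal_mul (by positivity)]
  refine ENNReal.ofReal_le_ofReal ?_
  have hc : (1:ℝ) ≤ Fintype.card 𝒳 := by exact_mod_cast Fintype.card_pos
  exact numeric_aux_stmt10 _ hc ε δ hε0 hε1 hδ0 hδ1 N hN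
end

section
/- Suppose 𝒳 is a finite set, f : Ξ × 𝒳 → ℝ ∪ {+∞}, and for each x ∈ 𝒳 the set {ξ : f(ξ,x) = +∞} is measurable with V(x) = ℙ({ξ : f(ξ,x) = +∞}). Let 𝒳^Infea = {x ∈ 𝒳 : V(x) > 0} be nonempty and η = min{V(x) : x ∈ 𝒳^Infea} > 0. Let ξ_1,…,ξ_N be IID from ℙ and let x⋆(ξ^[N]) be any point belonging with probability 1 to dom F̂_N = ∩_{i=1}^N {x ∈ 𝒳 : f(ξ_i,x) < +∞}. Then ℙ^N( V(x⋆(ξ^[N])) > 0 ) = ℙ^N( x⋆(ξ^[N]) ∈ 𝒳^Infea ) ≤ |𝒳^Infea| · (1 − η)^N. -/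
open MeasureTheory Real Set

/-- Direct bound with a finite feasible region.
With `𝒳` finite, `𝒳^Infea = {x : V(x) > 0}` nonempty and `η = min_{x ∈ 𝒳^Infea} V(x) > 0`,
any point `x⋆(ξ^[N])` lying a.s. in the SAA feasible region satisfies
`ℙ^N(V(x⋆) > 0) = ℙ^N(x⋆ ∈ 𝒳^Infea) ≤ |𝒳^Infea| (1−η)^N`. -/
theorem statement_11
    {Ξ : Type*} [MeasurableSpace Ξ] (P : Measure Ξ) [IsProbabilityMeasure P]
    {𝒳 : Type*} [Fintype 𝒳]
    (f : Ξ → 𝒳 → EReal)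
    (hmeas : ∀ x : 𝒳, MeasurableSet {ξ | f ξ x = ⊤})
    (V : 𝒳 → ℝ) (hV : ∀ x, V x = (P {ξ | f ξ x = ⊤}).toReal)
    (Infea : Finset 𝒳) (hInfea : ∀ x : 𝒳, x ∈ Infea ↔ 0 < V x)
    (hne : Infea.Nonempty)
    (η : ℝ) (hη : η = Infea.inf' hne V) (hηpos : 0 < η)
    (N : ℕ)
    (domF : (Fin N → Ξ) → Set 𝒳)
    (hdom : ∀ ω, domF ω = ⋂ i : Fin N, {x | f (ω i) x < ⊤})
    (xstar : (Fin N → Ξ) → 𝒳)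
    (hxstar : ∀ᵐ ω ∂(Measure.pi fun _ : Fin N => P), xstar ω ∈ domF ω) :
    (Measure.pi fun _ : Fin N => P) {ω | 0 < V (xstar ω)} =
      (Measure.pi fun _ : Fin N => P) {ω | xstar ω ∈ Infea} ∧
    (Measure.pi fun _ : Fin N => P) {ω | 0 < V (xstar ω)} ≤
      (Infea.card : ENNReal) * ENNReal.ofReal (1 - η) ^ N := by

  classical
  set μ := (Measure.pi fun _ : Fin N => P) with hμ
  have hset : {ω | 0 < V (xstar ω)} = {ω | xstar ω ∈ Infea} := by
    ext ω; simp [hInfea]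
  refine ⟨by rw [hset], ?_⟩
  rw [hset]
  -- a.e. inclusion into a finite union
  have hsub : ∀ᵐ ω ∂μ, ω ∈ {ω | xstar ω ∈ Infea} →
      ω ∈ ⋃ x ∈ Infea, {ω : Fin N → Ξ | ∀ i, f (ω i) x < ⊤} := by
    filter_upwards [hxstar] with ω hω hmem
    refine Set.mem_biUnion hmem ?_
    intro i
    have := hω
    rw [hdom ω] at this
    exact Set.mem_iInter.mp this i
  have h1 : μ {ω | xstar ω ∈ Infea} ≤ μ (⋃ x ∈ Infea, {ω : Fin N → Ξ | ∀ i, f (ω i) x < ⊤}) := by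
    apply measure_mono_ae
    exact hsub
  refine h1.trans ?_
  have h2 : μ (⋃ x ∈ Infea, {ω : Fin N → Ξ | ∀ i, f (ω i) x < ⊤}) ≤
      ∑ x ∈ Infea, μ {ω : Fin N → Ξ | ∀ i, f (ω i) x < ⊤} :=
    measure_biUnion_finset_le Infea _
  refine h2.trans ?_
  have key : ∀ x ∈ Infea, μ {ω : Fin N → Ξ | ∀ i, f (ω i) x < ⊤} ≤
      ENNReal.ofReal (1 - η) ^ N := by
    intro x hx
    have hSeq : {ω : Fin N → Ξ | ∀ i, f (ω i) x < ⊤} =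
        Set.pi Set.univ (fun _ : Fin N => {ξ | f ξ x = ⊤}ᶜ) := by
      ext ω
      simp only [Set.mem_setOf_eq, Set.mem_pi, Set.mem_univ, forall_true_left,
        Set.mem_compl_iff, lt_top_iff_ne_top]
    have hμpi : μ {ω : Fin N → Ξ | ∀ i, f (ω i) x < ⊤} =
        (P ({ξ | f ξ x = ⊤}ᶜ)) ^ N := by
      rw [hSeq, hμ, Measure.pi_pi, Finset.prod_const, Finset.card_univ, Fintype.card_fin]
    rw [hμpi]
    have hPc : P ({ξ | f ξ x = ⊤}ᶜ) = 1 - P {ξ | f ξ x = ⊤} :=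
      prob_compl_eq_one_sub (hmeas x)
    have hηle : η ≤ V x := hη ▸ Finset.inf'_le V hx
    have hPV : P {ξ | f ξ x = ⊤} = ENNReal.ofReal (V x) := by
      rw [hV x, ENNReal.ofReal_toReal (measure_ne_top P _)]
    have hstep : P ({ξ | f ξ x = ⊤}ᶜ) ≤ ENNReal.ofReal (1 - η) := by
      rw [hPc, hPV]
      calc 1 - ENNReal.ofReal (V x) ≤ 1 - ENNReal.ofReal η :=
            tsub_le_tsub_left (ENNReal.ofReal_le_ofReal hηle) 1
        _ = ENNReal.ofReal (1 - η) := by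
            rw [ENNReal.ofReal_sub 1 hηpos.le, ENNReal.ofReal_one]
    exact pow_le_pow_left' hstep N
  calc ∑ x ∈ Infea, μ {ω : Fin N → Ξ | ∀ i, f (ω i) x < ⊤}
      ≤ ∑ _x ∈ Infea, ENNReal.ofReal (1 - η) ^ N := Finset.sum_le_sum key
    _ = (Infea.card : ENNReal) * ENNReal.ofReal (1 - η) ^ N := by
        rw [Finset.sum_const, nsmul_eq_mul]
end

section
/- Let Ξ be a set, n ≥ 1 and J ≥ 1 integers, and suppose for each ξ ∈ Ξ we are given a matrix A_ξ ∈ ℝ^{J×n} and a vector b_ξ ∈ ℝ^J. Define for each x ∈ ℝ^n the set H_x = {ξ ∈ Ξ : A_ξ x ≤ b_ξ componentwise} = ∩_{j=1}^{J} {ξ ∈ Ξ : (A_ξ x)_j ≤ (b_ξ)_j}, and let 𝓗 = {H_x}_{x∈ℝ^n} ∪ {Ξ}. Then d_VC(𝓗) ≤ (e/((e−1)·log 2)) · J·(n+1) · log( (e/log 2) · J ). -/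
open MeasureTheory Real Set

section aux

lemma radon_vc {n : ℕ} {ι : Type*} [Fintype ι] (c : ι → Fin n → ℝ) (d : ι → ℝ)
    (h : ∀ t : Finset ι, ∃ x : Fin n → ℝ, ∀ ξ : ι, ((∑ k, c ξ k * x k) ≤ d ξ ↔ ξ ∈ t)) :
    Fintype.card ι ≤ n := by
  classical
  by_contra hcard
  push_neg at hcard
  have hnli : ¬ LinearIndependent ℝ c := by
    intro hli
    have := hli.fintype_card_le_finrank
    rw [Module.finrank_fin_fun] at this
    omega
  obtain ⟨g, hg0, i₀, hi₀⟩ := Fintype.not_linearIndependent_iff.1 hnli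
  set r : ℝ := ∑ i, g i * d i with hr
  have key : ∀ x : Fin n → ℝ, ∑ i, g i * ((∑ k, c i k * x k) - d i) = -r := by
    intro x
    have h1 : ∑ i, g i * (∑ k, c i k * x k) = 0 := by
      have hz : ∀ k, (∑ i, g i * c i k) = 0 := by
        intro k
        have := congrFun hg0 k
        simpa [Finset.sum_apply] using this
      calc ∑ i, g i * (∑ k, c i k * x k) = ∑ i, ∑ k, g i * c i k * x k := by
            simp [Finset.mul_sum, mul_assoc]
        _ = ∑ k, (∑ i, g i * c i k) * x k := by
            rw [Finset.sum_comm]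
            simp [Finset.sum_mul]
        _ = 0 := by simp [hz]
    simp [mul_sub, Finset.sum_sub_distrib, h1, hr]
  -- t = {i | 0 < g i} : every term ≤ 0, strict where g i < 0
  obtain ⟨x₁, hx₁⟩ := h (Finset.univ.filter fun i => 0 < g i)
  have hA : ∀ i, g i * ((∑ k, c i k * x₁ k) - d i) ≤ 0 := by
    intro i
    rcases lt_trichotomy (g i) 0 with hgi | hgi | hgi
    · have hnot : ¬ ((∑ k, c i k * x₁ k) ≤ d i) := by
        rw [hx₁ i, Finset.mem_filter]; push_neg; intro _; linarith
      push_neg at hnot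
      nlinarith
    · simp [hgi]
    · have : (∑ k, c i k * x₁ k) ≤ d i := by
        rw [hx₁ i, Finset.mem_filter]; exact ⟨Finset.mem_univ i, hgi⟩
      nlinarith
  have hA' : ∀ i, g i < 0 → g i * ((∑ k, c i k * x₁ k) - d i) < 0 := by
    intro i hgi
    have hnot : ¬ ((∑ k, c i k * x₁ k) ≤ d i) := by
      rw [hx₁ i, Finset.mem_filter]; push_neg; intro _; linarith
    push_neg at hnot
    nlinarith
  -- t = {i | g i ≤ 0} : every term ≥ 0, strict where g i > 0
  obtain ⟨x₂, hx₂⟩ := h (Finset.univ.filter fun i => g i ≤ 0)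
  have hB : ∀ i, 0 ≤ g i * ((∑ k, c i k * x₂ k) - d i) := by
    intro i
    rcases lt_trichotomy (g i) 0 with hgi | hgi | hgi
    · have : (∑ k, c i k * x₂ k) ≤ d i := by
        rw [hx₂ i, Finset.mem_filter]; exact ⟨Finset.mem_univ i, le_of_lt hgi⟩
      nlinarith
    · simp [hgi]
    · have hnot : ¬ ((∑ k, c i k * x₂ k) ≤ d i) := by
        rw [hx₂ i, Finset.mem_filter]; push_neg; intro _; linarith
      push_neg at hnot
      nlinarith
  have hB' : ∀ i, 0 < g i → 0 < g i * ((∑ k, c i k * x₂ k) - d i) := by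
    intro i hgi
    have hnot : ¬ ((∑ k, c i k * x₂ k) ≤ d i) := by
      rw [hx₂ i, Finset.mem_filter]; push_neg; intro _; linarith
    push_neg at hnot
    nlinarith
  rcases lt_trichotomy r 0 with hrneg | hrzero | hrpos
  · have hsum : ∑ i, g i * ((∑ k, c i k * x₁ k) - d i) ≤ 0 :=
      Finset.sum_nonpos fun i _ => hA i
    rw [key x₁] at hsum; linarith
  · rcases lt_or_gt_of_ne hi₀ with hneg | hpos
    · have hsum : ∑ i, g i * ((∑ k, c i k * x₁ k) - d i) < ∑ _i : ι, (0:ℝ) :=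
        Finset.sum_lt_sum (fun i _ => hA i) ⟨i₀, Finset.mem_univ i₀, hA' i₀ hneg⟩
      rw [key x₁] at hsum; simp at hsum; linarith
    · have hsum : ∑ _i : ι, (0:ℝ) < ∑ i, g i * ((∑ k, c i k * x₂ k) - d i) :=
        Finset.sum_lt_sum (fun i _ => hB i) ⟨i₀, Finset.mem_univ i₀, hB' i₀ hpos⟩
      rw [key x₂] at hsum; simp at hsum; linarith
  · have hsum : (0:ℝ) ≤ ∑ i, g i * ((∑ k, c i k * x₂ k) - d i) :=
      Finset.sum_nonneg fun i _ => hB i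
    rw [key x₂] at hsum; linarith

lemma sum_choose_le_pow (d m : ℕ) (hd : 1 ≤ d) (hdm : d ≤ m) :
    (∑ k ∈ Finset.Iic d, (m.choose k : ℝ)) ≤ (Real.exp 1 * m / d) ^ d := by
  have hm0 : 0 < m := lt_of_lt_of_le hd hdm
  have hm : 0 < (m:ℝ) := by exact_mod_cast hm0
  have hdR : 0 < (d:ℝ) := by exact_mod_cast hd
  set t : ℝ := (d:ℝ) / m with ht
  have ht0 : 0 < t := by positivity
  have ht1 : t ≤ 1 := by
    rw [ht, div_le_one hm]; exact_mod_cast hdm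
  have step1 : (∑ k ∈ Finset.Iic d, (m.choose k : ℝ)) * t ^ d
      ≤ ∑ k ∈ Finset.Iic d, (m.choose k : ℝ) * t ^ k := by
    rw [Finset.sum_mul]
    apply Finset.sum_le_sum
    intro k hk
    have : t ^ d ≤ t ^ k := pow_le_pow_of_le_one (le_of_lt ht0) ht1 (Finset.mem_Iic.1 hk)
    have hc : (0:ℝ) ≤ (m.choose k : ℝ) := by positivity
    nlinarith
  have step2 : ∑ k ∈ Finset.Iic d, (m.choose k : ℝ) * t ^ k
      ≤ ∑ k ∈ Finset.range (m+1), (m.choose k : ℝ) * t ^ k := by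
    apply Finset.sum_le_sum_of_subset_of_nonneg
    · intro k hk
      rw [Finset.mem_range]
      have := Finset.mem_Iic.1 hk
      omega
    · intro k _ _
      positivity
  have step3 : ∑ k ∈ Finset.range (m+1), (m.choose k : ℝ) * t ^ k = (t + 1) ^ m := by
    rw [add_pow]
    apply Finset.sum_congr rfl
    intro k _
    simp
    ring
  have step4 : (t + 1) ^ m ≤ Real.exp 1 ^ d := by
    have h1 : (t + 1) ^ m ≤ Real.exp t ^ m := by
      apply pow_le_pow_left₀ (by positivity)
      linarith [Real.add_one_le_exp t]
    have h2 : Real.exp t ^ m = Real.exp (t * m) := by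
      rw [← Real.exp_nat_mul]; ring_nf
    have h3 : t * m = d := by
      rw [ht]; field_simp
    rw [h2, h3] at h1
    have h4 : Real.exp (d:ℝ) = Real.exp 1 ^ d := by
      rw [← Real.exp_nat_mul]; ring_nf
    rw [h4] at h1; exact h1
  have hfin : (∑ k ∈ Finset.Iic d, (m.choose k : ℝ)) * t ^ d ≤ Real.exp 1 ^ d :=
    le_trans step1 (le_trans step2 (step3.le.trans step4))
  have htd : 0 < t ^ d := by positivity
  rw [← le_div_iff₀ htd] at hfin
  calc (∑ k ∈ Finset.Iic d, (m.choose k : ℝ)) ≤ Real.exp 1 ^ d / t ^ d := hfin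
    _ = (Real.exp 1 / t) ^ d := by rw [← div_pow]
    _ = (Real.exp 1 * m / d) ^ d := by
        congr 1
        rw [ht]
        field_simp

lemma analytic_final (dn J : ℕ) (m : ℝ) (hd : 1 ≤ dn) (hJ : 1 ≤ J) (hm : (dn:ℝ) ≤ m)
    (h : m * Real.log 2 ≤ ((dn:ℝ) * J) * Real.log (Real.exp 1 * m / dn)) :
    m ≤ Real.exp 1 / ((Real.exp 1 - 1) * Real.log 2) * ((J:ℝ) * dn) *
      Real.log (Real.exp 1 / Real.log 2 * J) := by
  have hdR : (1:ℝ) ≤ (dn:ℝ) := by exact_mod_cast hd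
  have hJR : (1:ℝ) ≤ (J:ℝ) := by exact_mod_cast hJ
  have he : (2.7182818283:ℝ) < Real.exp 1 := Real.exp_one_gt_d9
  have he1 : (1:ℝ) < Real.exp 1 := by linarith
  have hl2 : (0:ℝ) < Real.log 2 := Real.log_pos (by norm_num)
  have hl2' : Real.log 2 < 1 := by
    have h2e : (2:ℝ) < Real.exp 1 := by linarith
    have := Real.log_lt_log (by norm_num : (0:ℝ) < 2) h2e
    rwa [Real.log_exp] at this
  have hm0 : (0:ℝ) < m := lt_of_lt_of_le (by linarith) hm
  set e := Real.exp 1 with hedef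
  set L := Real.log (e / Real.log 2 * J) with hLdef
  have hXe : e ≤ e / Real.log 2 * J := by
    have h1 : e ≤ e / Real.log 2 := by
      rw [le_div_iff₀ hl2]; nlinarith
    nlinarith [div_pos (by linarith : (0:ℝ) < e) hl2]
  have hL1 : 1 ≤ L := by
    rw [hLdef]
    calc (1:ℝ) = Real.log e := (Real.log_exp 1).symm
      _ ≤ _ := Real.log_le_log (by positivity) hXe
  set c := e / (e - 1) * L with hcdef
  have hee1 : (0:ℝ) < e - 1 := by linarith
  have hc1 : 1 < c := by
    have h1 : (1:ℝ) < e / (e - 1) := by rw [lt_div_iff₀ hee1]; linarith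
    nlinarith
  have hc0 : (0:ℝ) < c := by linarith
  set D := (dn:ℝ) * J with hDdef
  have hD0 : (0:ℝ) < D := by positivity
  -- key A
  have keyA : Real.log (e * m / dn) = Real.log (m * Real.log 2 / D) + L := by
    have hx : e * m / dn = (m * Real.log 2 / D) * (e / Real.log 2 * J) := by
      field_simp
      ring
    rw [hx, Real.log_mul (by positivity) (by positivity)]
  -- key B
  have keyB : Real.log (m * Real.log 2 / D) ≤ m * Real.log 2 / (D * c) - 1 + Real.log c := by
    have hx : m * Real.log 2 / D = (m * Real.log 2 / (D * c)) * c := by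
      field_simp
    rw [hx, Real.log_mul (by positivity) (by positivity)]
    have := Real.log_le_sub_one_of_pos (show (0:ℝ) < m * Real.log 2 / (D * c) by positivity)
    linarith
  -- key C : log c ≤ c / e
  have keyC : Real.log c ≤ c / e := by
    have hce : (0:ℝ) < c / e := by positivity
    have hx : c = (c / e) * e := by field_simp
    have h1 : Real.log c = Real.log (c / e) + 1 := by
      conv_lhs => rw [hx]
      rw [Real.log_mul (by positivity) (by positivity), hedef, Real.log_exp]
    have := Real.log_le_sub_one_of_pos hce
    linarith
  -- key D : c / e + L = c
  have keyD : c / e + L = c := by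
    rw [hcdef]
    field_simp
    ring
  -- combine
  have hmain : m * Real.log 2 ≤ m * Real.log 2 / c + D * (c - 1) := by
    have h1 : m * Real.log 2 ≤ D * (Real.log (m * Real.log 2 / D) + L) := by
      rw [← keyA]; exact h
    have h2 : Real.log (m * Real.log 2 / D) + L ≤ m * Real.log 2 / (D * c) - 1 + c/e + L := by
      linarith [keyB, keyC]
    have h3 : m * Real.log 2 / (D * c) - 1 + c/e + L = m * Real.log 2 / (D * c) + (c - 1) := by
      linarith [keyD]
    have h4 : D * (m * Real.log 2 / (D * c) + (c - 1)) = m * Real.log 2 / c + D * (c - 1) := by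
      field_simp
    calc m * Real.log 2 ≤ D * (Real.log (m * Real.log 2 / D) + L) := h1
      _ ≤ D * (m * Real.log 2 / (D * c) + (c - 1)) := by
          apply mul_le_mul_of_nonneg_left _ (le_of_lt hD0)
          linarith
      _ = m * Real.log 2 / c + D * (c - 1) := h4
  have hfin : m * Real.log 2 ≤ D * c := by
    have hx : m * Real.log 2 / c * c = m * Real.log 2 := by field_simp
    nlinarith [hmain, hc1, hx]
  -- conclude
  have hgoal : e / ((e - 1) * Real.log 2) * ((J:ℝ) * dn) * L = D * c / Real.log 2 := by
    rw [hcdef, hDdef]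
    field_simp
  rw [hgoal, le_div_iff₀ hl2]
  exact hfin

section helpers
variable {Ξ : Type*} {n J : ℕ}

-- constants
lemma log2_pos : (0:ℝ) < Real.log 2 := Real.log_pos (by norm_num)
lemma log2_lt_one : Real.log 2 < 1 := by
  have h2e : (2:ℝ) < Real.exp 1 := by have := Real.exp_one_gt_d9; linarith
  have := Real.log_lt_log (by norm_num : (0:ℝ) < 2) h2e
  rwa [Real.log_exp] at this
lemma L_ge_one (J : ℕ) (hJ : 1 ≤ J) : 1 ≤ Real.log (Real.exp 1 / Real.log 2 * J) := by
  have hJR : (1:ℝ) ≤ (J:ℝ) := by exact_mod_cast hJ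
  have he1 : (1:ℝ) < Real.exp 1 := by have := Real.exp_one_gt_d9; linarith
  have hXe : Real.exp 1 ≤ Real.exp 1 / Real.log 2 * J := by
    have h1 : Real.exp 1 ≤ Real.exp 1 / Real.log 2 := by
      rw [le_div_iff₀ log2_pos]; nlinarith [log2_pos, log2_lt_one]
    nlinarith [div_pos (by linarith : (0:ℝ) < Real.exp 1) log2_pos]
  calc (1:ℝ) = Real.log (Real.exp 1) := (Real.log_exp 1).symm
    _ ≤ _ := Real.log_le_log (by positivity) hXe
lemma K_ge_one : 1 ≤ Real.exp 1 / ((Real.exp 1 - 1) * Real.log 2) := by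
  have he1 : (1:ℝ) < Real.exp 1 := by have := Real.exp_one_gt_d9; linarith
  rw [le_div_iff₀ (by nlinarith [log2_pos])]
  nlinarith [log2_pos, log2_lt_one]
end helpers

lemma mem_image_val {β : Type*} [DecidableEq β] {p : β → Prop} (D : Finset (Subtype p)) (ξ : Subtype p) :
    (ξ : β) ∈ D.image Subtype.val ↔ ξ ∈ D := by
  constructor
  · intro hx
    obtain ⟨ζ, hζ, hζξ⟩ := Finset.mem_image.1 hx
    rwa [show ζ = ξ from Subtype.ext hζξ] at hζ
  · intro hx; exact Finset.mem_image.2 ⟨ξ, hx, rfl⟩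



theorem core_count {Ξ : Type*} (n J : ℕ) (hJ : 1 ≤ J)
    (A : Ξ → Matrix (Fin J) (Fin n) ℝ) (b : Ξ → Fin J → ℝ) (S : Finset Ξ)
    (hS : ShattersFam
        ((Set.range fun x : Fin n → ℝ => {ξ | ∀ j : Fin J, (A ξ).mulVec x j ≤ b ξ j}) ∪
          {Set.univ}) S)
    (hcard : n + 1 ≤ S.card) :
    2 ^ S.card ≤ (∑ k ∈ Finset.Iic (n+1), (S.card).choose k) ^ J := by
  classical
  set α := {ξ // ξ ∈ S} with hα
  let trace : (Fin n → ℝ) → Fin J → Finset α :=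
    fun x j => Finset.univ.filter (fun ξ : α => (A ξ.1).mulVec x j ≤ b ξ.1 j)
  let 𝒜 : Fin J → Finset (Finset α) :=
    fun j => (Set.toFinite (Set.range fun x : Fin n → ℝ => trace x j)).toFinset
  let ℬ : Fin J → Finset (Finset α) := fun j => insert Finset.univ (𝒜 j)
  let ρ : (Fin J → Finset α) → Finset α :=
    fun t => Finset.univ.filter (fun ξ : α => ∀ j, ξ ∈ t j)
  have hmemD : ∀ (D : Finset α) (ξ : α), (ξ : Ξ) ∈ (D.image Subtype.val) ↔ ξ ∈ D :=
    fun D ξ => mem_image_val D ξ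
  -- surjectivity
  have surj : ∀ D : Finset α, ∃ t ∈ Fintype.piFinset ℬ, ρ t = D := by
    intro D
    have hDsub : (D.image Subtype.val) ⊆ S := by
      intro a ha
      obtain ⟨ζ, _, rfl⟩ := Finset.mem_image.1 ha
      exact ζ.2
    obtain ⟨C, hC, hsub, hdisj⟩ := hS (D.image Subtype.val) hDsub
    rcases hC with hC | hC
    · obtain ⟨x, hx⟩ := hC
      refine ⟨fun j => trace x j, ?_, ?_⟩
      · rw [Fintype.mem_piFinset]
        intro j
        exact Finset.mem_insert_of_mem ((Set.Finite.mem_toFinset _).2 ⟨x, rfl⟩)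
      · ext ξ
        have hcond : ξ ∈ ρ (fun j => trace x j) ↔ (ξ : Ξ) ∈ C := by
          rw [← hx]
          simp [ρ, trace]
        rw [hcond]
        constructor
        · intro hξC
          by_contra hξD
          have h1 : (ξ : Ξ) ∈ ((S : Set Ξ) \ ((D.image Subtype.val : Finset Ξ) : Set Ξ)) ∩ C := by
            refine ⟨⟨ξ.2, ?_⟩, hξC⟩
            intro hmem
            exact hξD ((hmemD D ξ).1 (by exact_mod_cast hmem))
          rw [hdisj] at h1
          exact h1
        · intro hξD
          exact hsub (by exact_mod_cast (hmemD D ξ).2 hξD)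
    · rw [Set.mem_singleton_iff] at hC
      subst hC
      have hDuniv : D = Finset.univ := by
        ext ξ
        simp only [Finset.mem_univ, iff_true]
        by_contra hξD
        have h2 : (ξ : Ξ) ∈ ((S : Set Ξ) \ ((D.image Subtype.val : Finset Ξ) : Set Ξ)) ∩ Set.univ := by
          refine ⟨⟨ξ.2, ?_⟩, Set.mem_univ _⟩
          intro hmem
          exact hξD ((hmemD D ξ).1 (by exact_mod_cast hmem))
        rw [hdisj] at h2
        exact h2
      refine ⟨fun _ => Finset.univ, ?_, ?_⟩
      · rw [Fintype.mem_piFinset]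
        intro j
        exact Finset.mem_insert_self _ _
      · rw [hDuniv]
        ext ξ
        simp [ρ]
  -- cardinality chain
  have hcard1 : 2 ^ S.card ≤ (Fintype.piFinset ℬ).card := by
    have h1 : (Finset.univ : Finset (Finset α)).card ≤ (Fintype.piFinset ℬ).card := by
      apply Finset.card_le_card_of_surjOn ρ
      intro D _
      obtain ⟨t, ht, hρt⟩ := surj D
      exact ⟨t, ht, hρt⟩
    rwa [Finset.card_univ, Fintype.card_finset, Fintype.card_coe] at h1
  have hvc : ∀ j, (𝒜 j).vcDim ≤ n := by
    intro j
    apply Finset.sup_le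
    intro s hs
    rw [Finset.mem_shatterer] at hs
    have happ : ∀ t : Finset {i // i ∈ s}, ∃ x : Fin n → ℝ, ∀ i : {i // i ∈ s},
        ((∑ k, A (i.1 : Ξ) j k * x k) ≤ b (i.1 : Ξ) j ↔ i ∈ t) := by
      intro t
      have htsub : t.image Subtype.val ⊆ s := by
        intro a ha
        obtain ⟨ζ, _, rfl⟩ := Finset.mem_image.1 ha
        exact ζ.2
      obtain ⟨u, hu, hsu⟩ := hs htsub
      obtain ⟨x, hxu⟩ := (Set.Finite.mem_toFinset _).1 hu
      refine ⟨x, fun i => ?_⟩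
      have hmv : (A (i.1 : Ξ)).mulVec x j = ∑ k, A (i.1 : Ξ) j k * x k := rfl
      have h1 : ((∑ k, A (i.1 : Ξ) j k * x k) ≤ b (i.1 : Ξ) j) ↔ i.1 ∈ trace x j := by
        rw [← hmv]; simp [trace]
      have hxu' : trace x j = u := hxu
      have h2 : i.1 ∈ trace x j ↔ i.1 ∈ s ∩ u := by
        rw [hxu']
        simp [Finset.mem_inter, i.2]
      rw [h1, h2, hsu]
      exact mem_image_val t i
    have := radon_vc _ _ happ
    rwa [Fintype.card_coe] at this
  have hBj : ∀ j, (ℬ j).card ≤ ∑ k ∈ Finset.Iic (n+1), (S.card).choose k := by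
    intro j
    have h1 : (ℬ j).card ≤ (𝒜 j).card + 1 := Finset.card_insert_le _ _
    have h2 : (𝒜 j).card ≤ (𝒜 j).shatterer.card := Finset.card_le_card_shatterer _
    have h3 : (𝒜 j).shatterer.card ≤ ∑ k ∈ Finset.Iic ((𝒜 j).vcDim), (Fintype.card α).choose k :=
      Finset.card_shatterer_le_sum_vcDim
    have h4 : ∑ k ∈ Finset.Iic ((𝒜 j).vcDim), (Fintype.card α).choose k
        ≤ ∑ k ∈ Finset.Iic n, (S.card).choose k := by
      rw [Fintype.card_coe]
      apply Finset.sum_le_sum_of_subset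
      intro k hk
      rw [Finset.mem_Iic] at *
      exact le_trans hk (hvc j)
    have h5 : (∑ k ∈ Finset.Iic n, (S.card).choose k) + 1
        ≤ ∑ k ∈ Finset.Iic (n+1), (S.card).choose k := by
      have hiic : ∀ m : ℕ, Finset.Iic m = Finset.range (m+1) := by
        intro m; ext k; simp [Nat.lt_succ_iff]
      rw [hiic n, hiic (n+1)]
      conv_rhs => rw [Finset.sum_range_succ]
      have : 1 ≤ (S.card).choose (n+1) := Nat.choose_pos hcard
      omega
    omega
  calc 2 ^ S.card ≤ (Fintype.piFinset ℬ).card := hcard1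
    _ = ∏ j, (ℬ j).card := Fintype.card_piFinset ℬ
    _ ≤ ∏ _j : Fin J, (∑ k ∈ Finset.Iic (n+1), (S.card).choose k) := by
        apply Finset.prod_le_prod'
        intro j _
        exact hBj j
    _ = (∑ k ∈ Finset.Iic (n+1), (S.card).choose k) ^ J := by
        rw [Finset.prod_const, Finset.card_univ, Fintype.card_fin]



end aux

/-- VC bound for domains cut out by `J` linear inequalities.
For `H_x = ∩_{j≤J} {ξ : (A_ξ x)_j ≤ (b_ξ)_j}` and `𝓗 = {H_x}_{x∈ℝ^n} ∪ {Ξ}`,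
`d_VC(𝓗) ≤ (e/((e−1) log 2)) J (n+1) log((e/log 2) J)` (stated via shattered sets). -/
theorem statement_12 {Ξ : Type*} (n J : ℕ) (hn : 1 ≤ n) (hJ : 1 ≤ J)
    (A : Ξ → Matrix (Fin J) (Fin n) ℝ) (b : Ξ → Fin J → ℝ) :
    ∀ S : Finset Ξ,
      ShattersFam
        ((Set.range fun x : Fin n → ℝ => {ξ | ∀ j : Fin J, (A ξ).mulVec x j ≤ b ξ j}) ∪
          {Set.univ}) S →
      (S.card : ℝ) ≤ Real.exp 1 / ((Real.exp 1 - 1) * Real.log 2) * (J * (n + 1)) *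
        Real.log (Real.exp 1 / Real.log 2 * J) := by
  intro S hS
  classical
  have hL := L_ge_one J hJ
  have hK := K_ge_one
  have hJR : (1:ℝ) ≤ (J:ℝ) := by exact_mod_cast hJ
  by_cases hsmall : S.card ≤ n + 1
  · have h0 : (S.card : ℝ) ≤ (n:ℝ) + 1 := by exact_mod_cast hsmall
    have hpos : (0:ℝ) < (J:ℝ) * ((n:ℝ) + 1) := by positivity
    have h1 : (n:ℝ) + 1 ≤ (J:ℝ) * ((n:ℝ) + 1) := le_mul_of_one_le_left (by positivity) hJR
    have h2 : (J:ℝ) * ((n:ℝ) + 1) ≤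
        Real.exp 1 / ((Real.exp 1 - 1) * Real.log 2) * ((J:ℝ) * ((n:ℝ) + 1)) :=
      le_mul_of_one_le_left (le_of_lt hpos) hK
    have h3 : Real.exp 1 / ((Real.exp 1 - 1) * Real.log 2) * ((J:ℝ) * ((n:ℝ) + 1)) ≤
        Real.exp 1 / ((Real.exp 1 - 1) * Real.log 2) * ((J:ℝ) * ((n:ℝ) + 1)) *
          Real.log (Real.exp 1 / Real.log 2 * J) :=
      le_mul_of_one_le_right (by linarith) hL
    linarith
  · push_neg at hsmall
    have hcard : n + 1 ≤ S.card := le_of_lt hsmall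
    have hcc := core_count n J hJ A b S hS hcard
    set m := S.card with hm
    have hm0 : 0 < m := by omega
    have hR : (2:ℝ) ^ m ≤ ((∑ k ∈ Finset.Iic (n+1), m.choose k : ℕ) : ℝ) ^ J := by
      exact_mod_cast hcc
    have hsum : ((∑ k ∈ Finset.Iic (n+1), m.choose k : ℕ) : ℝ)
        = ∑ k ∈ Finset.Iic (n+1), (m.choose k : ℝ) := by push_cast; rfl
    have hsc := sum_choose_le_pow (n+1) m (by omega) hcard
    have hXpos : (0:ℝ) < Real.exp 1 * m / ((n+1:ℕ):ℝ) := by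
      have : (0:ℝ) < (m:ℝ) := by exact_mod_cast hm0
      positivity
    have h6 : (2:ℝ) ^ m ≤ (Real.exp 1 * m / ((n+1:ℕ):ℝ)) ^ ((n+1) * J) := by
      calc (2:ℝ) ^ m ≤ ((∑ k ∈ Finset.Iic (n+1), m.choose k : ℕ) : ℝ) ^ J := hR
        _ ≤ ((Real.exp 1 * m / ((n+1:ℕ):ℝ)) ^ (n+1)) ^ J := by
            apply pow_le_pow_left₀ (by positivity)
            rw [hsum]
            exact hsc
        _ = (Real.exp 1 * m / ((n+1:ℕ):ℝ)) ^ ((n+1) * J) := by rw [← pow_mul]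
    have h7 : (m:ℝ) * Real.log 2 ≤ (((n+1:ℕ):ℝ) * (J:ℕ)) * Real.log (Real.exp 1 * m / ((n+1:ℕ):ℝ)) := by
      have hlog := Real.log_le_log (by positivity : (0:ℝ) < (2:ℝ) ^ m) h6
      rw [Real.log_pow, Real.log_pow] at hlog
      push_cast at hlog ⊢
      linarith
    have hfin := analytic_final (n+1) J (m:ℝ) (by omega) hJ (by exact_mod_cast hcard) h7
    push_cast at hfin ⊢
    linarith
end

section
/- Let Ξ be a set, n ≥ 1, n₀ ≤ n, and J ≥ 1 integers, and suppose for each ξ ∈ Ξ we are given A_ξ ∈ ℝ^{J×n} and b_ξ ∈ ℝ^J. For each x ∈ ℝ^n with ‖x‖₀ ≤ n₀ define H_x = ∩_{j=1}^{J} {ξ ∈ Ξ : (A_ξ x)_j ≤ (b_ξ)_j}, and let 𝓗 = {H_x}_{x∈ℝ^n, ‖x‖₀ ≤ n₀} ∪ {Ξ}. Then d_VC(𝓗) ≤ (e/((e−1)·log 2)) · J · ( 2(n₀+1)·log₂( (n·e + e)/(n₀+1) ) ) · log( (e/log 2)·J ). -/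
/-!
If `𝓗` shatters `S`, every subset of `S` is the trace on `S` of `Ξ` or of some `H_x`. Once a
support `T` with `|T| = n₀` is fixed for `x`, the trace of `H_x` is read off from the signs that
one linear functional takes on the `|S| J` points `((A_ξ)_{j,T}, -(b_ξ)_j) ∈ ℝ^{n₀+1}`. Such sign
patterns shatter no set of more than `n₀ + 1` points (a linear dependence among the points
contradicts shattering), so by Sauer–Shelah there are at most `∑_{i ≤ n₀+1} C(|S| J, i)` of them.
Summing over the `C(n, n₀)` supports gives `2^|S| ≤ 1 + C(n, n₀) ∑_{i ≤ n₀+1} C(|S| J, i)`, and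
`∑_{i ≤ D} C(N, i) ≤ (e N / D)^D` together with `log u ≤ u - 1` turns this into the bound.
-/

open MeasureTheory Real Set

open Finset

section SignPatterns

variable {ι V : Type*} [Fintype ι] [AddCommGroup V] [Module ℝ V]

open Classical in
noncomputable def signPatterns (w : ι → V) : Finset (Finset ι) :=
  univ.filter fun q => ∃ φ : Module.Dual ℝ V, ∀ i, i ∈ q ↔ φ (w i) ≤ 0

lemma not_shatters_signPatterns_of_sum_smul_eq_zero [DecidableEq ι] {w : ι → V} {s : Finset ι}
    (hs : (signPatterns w).Shatters s) {g : ι → ℝ} (hg : ∑ i ∈ s, g i • w i = 0) {i₀ : ι}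
    (hi₀ : i₀ ∈ s) (hgi₀ : 0 < g i₀) : False := by
  classical
  obtain ⟨q, hq, hsq⟩ := hs (filter_subset (fun i => g i ≤ 0) s)
  obtain ⟨φ, hφ⟩ := (mem_filter.1 hq).2
  have hmem : ∀ i ∈ s, g i ≤ 0 ↔ φ (w i) ≤ 0 := fun i hi => by
    simpa [hi, hφ] using (Finset.ext_iff.1 hsq i).symm
  have hterm : ∀ i ∈ s, 0 ≤ g i * φ (w i) := fun i hi => by
    rcases le_or_gt (g i) 0 with h | h
    · exact mul_nonneg_of_nonpos_of_nonpos h ((hmem i hi).1 h)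
    · exact (mul_pos h (not_le.1 <| (hmem i hi).not.1 h.not_ge)).le
  have hsum : ∑ i ∈ s, g i * φ (w i) = 0 := by
    simpa only [map_sum, map_smul, smul_eq_mul, map_zero] using congrArg φ hg
  have hpos : 0 < g i₀ * φ (w i₀) :=
    mul_pos hgi₀ (not_le.1 <| (hmem i₀ hi₀).not.1 hgi₀.not_ge)
  exact hpos.ne' <| (sum_eq_zero_iff_of_nonneg hterm).1 hsum i₀ hi₀

lemma card_le_finrank_of_shatters_signPatterns [DecidableEq ι] [FiniteDimensional ℝ V]
    {w : ι → V} {s : Finset ι} (hs : (signPatterns w).Shatters s) :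
    #s ≤ Module.finrank ℝ V := by
  by_contra! hlt
  have hdep : ¬ LinearIndepOn ℝ w (s : Set ι) := fun h =>
    (hlt.trans_le (by simpa using h.fintype_card_le_finrank)).false
  obtain ⟨g, hg, i₀, hi₀, hgi₀⟩ := not_linearIndepOn_finset_iff.1 hdep
  rcases hgi₀.lt_or_gt with hneg | hpos
  · exact not_shatters_signPatterns_of_sum_smul_eq_zero hs (g := -g)
      (by simp [neg_smul, sum_neg_distrib, hg]) hi₀ (neg_pos.2 hneg)
  · exact not_shatters_signPatterns_of_sum_smul_eq_zero hs hg hi₀ hpos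

lemma card_signPatterns_le [FiniteDimensional ℝ V] (w : ι → V) :
    #(signPatterns w) ≤ ∑ k ∈ Iic (Module.finrank ℝ V), (Fintype.card ι).choose k := by
  classical
  calc #(signPatterns w) ≤ #(signPatterns w).shatterer := card_le_card_shatterer _
    _ ≤ ∑ k ∈ Iic (signPatterns w).vcDim, (Fintype.card ι).choose k :=
      card_shatterer_le_sum_vcDim
    _ ≤ _ := sum_le_sum_of_subset (Iic_subset_Iic.2 <| Finset.sup_le fun s hs =>
      card_le_finrank_of_shatters_signPatterns (mem_shatterer.1 hs))

end SignPatterns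

section Traces

variable {α β : Type*} {H H' : Set (Set α)} {S : Finset α}

open Classical in
noncomputable def traces (H : Set (Set α)) (S : Finset α) : Finset (Finset S) :=
  univ.filter fun t => ∃ C ∈ H, ∀ ξ : S, ξ ∈ t ↔ (ξ : α) ∈ C

lemma mem_traces {t : Finset S} : t ∈ traces H S ↔ ∃ C ∈ H, ∀ ξ : S, ξ ∈ t ↔ (ξ : α) ∈ C := by
  classical
  simp [traces]

lemma ShattersFam.traces_eq_univ (h : ShattersFam H S) : traces H S = Finset.univ := by
  classical
  refine eq_univ_of_forall fun t => mem_traces.2 ?_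
  obtain ⟨C, hC, htC, hCt⟩ := h (t.map (Function.Embedding.subtype _)) fun _ ha => by
    obtain ⟨ξ, -, rfl⟩ := mem_map.1 ha
    exact ξ.2
  refine ⟨C, hC, fun ξ => ⟨fun hξ => htC (by simpa using hξ), fun hξ => ?_⟩⟩
  by_contra hξt
  exact (Set.eq_empty_iff_forall_notMem.1 hCt) ξ ⟨⟨by simp, by simpa using hξt⟩, hξ⟩

lemma traces_mono (h : H ⊆ H') : traces H S ⊆ traces H' S := fun _ ht =>
  have ⟨C, hC, hCt⟩ := mem_traces.1 ht
  mem_traces.2 ⟨C, h hC, hCt⟩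

lemma traces_union [DecidableEq α] : traces (H ∪ H') S = traces H S ∪ traces H' S := by
  ext t
  simp only [Finset.mem_union, mem_traces, Set.mem_union, or_and_right, exists_or]

lemma card_traces_singleton_le (C : Set α) : #(traces {C} S) ≤ 1 :=
  card_le_one.2 fun t ht u hu => by
    obtain ⟨_, rfl, hCt⟩ := mem_traces.1 ht
    obtain ⟨_, rfl, hCu⟩ := mem_traces.1 hu
    ext ξ
    rw [hCt, hCu]

lemma traces_biUnion [DecidableEq α] (s : Finset β) (H : β → Set (Set α)) :
    traces (⋃ T ∈ s, H T) S = s.biUnion fun T => traces (H T) S := by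
  ext t
  simp only [Finset.mem_biUnion, mem_traces, Set.mem_iUnion, exists_prop]
  tauto

end Traces

lemma exists_mem_powersetCard_support_subset {n n0 : ℕ} {x : Fin n → ℝ}
    (hx : {i | x i ≠ 0}.ncard ≤ n0) (hn0 : n0 ≤ n) :
    ∃ T ∈ powersetCard n0 (Finset.univ : Finset (Fin n)), ∀ i ∉ T, x i = 0 := by
  classical
  have hsupp : #(Finset.univ.filter fun i => x i ≠ 0) ≤ n0 := by
    rwa [← Set.ncard_coe_finset, coe_filter_univ]
  obtain ⟨T, hsuppT, -, hT⟩ := exists_subsuperset_card_eq (subset_univ _) hsupp (by simpa)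
  refine ⟨T, mem_powersetCard_univ.2 hT, fun i hi => ?_⟩
  by_contra hxi
  exact hi (hsuppT (by simpa using hxi))

section FeasibleSets

variable {Ξ : Type*} {n J : ℕ} (A : Ξ → Matrix (Fin J) (Fin n) ℝ) (b : Ξ → Fin J → ℝ)

def feasibleSet (x : Fin n → ℝ) : Set Ξ := {ξ | ∀ j, (A ξ).mulVec x j ≤ b ξ j}

lemma exists_dual_apply_nonpos_iff_dotProduct_le {T : Finset (Fin n)} {x : Fin n → ℝ}
    (hx : ∀ i ∉ T, x i = 0) :
    ∃ φ : Module.Dual ℝ ((T → ℝ) × ℝ), ∀ (a : Fin n → ℝ) (c : ℝ),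
      φ (fun i => a i, -c) ≤ 0 ↔ a ⬝ᵥ x ≤ c := by
  refine ⟨(Fintype.linearCombination ℝ fun i : T => x i).coprod LinearMap.id, fun a c => ?_⟩
  have hsum : a ⬝ᵥ x = ∑ i : T, a i * x i := by
    rw [dotProduct, ← sum_subset (subset_univ T) fun i _ hi => by rw [hx i hi, mul_zero],
      sum_coe_sort T fun i => a i * x i]
  simp only [LinearMap.coprod_apply, Fintype.linearCombination_apply, smul_eq_mul,
    LinearMap.id_apply, hsum]
  constructor <;> intro h <;> linarith

lemma card_traces_feasibleSet_le (T : Finset (Fin n)) (S : Finset Ξ) :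
    #(traces (feasibleSet A b '' {x | ∀ i ∉ T, x i = 0}) S) ≤
      ∑ k ∈ Iic (#T + 1), (#S * J).choose k := by
  classical
  let w : S × Fin J → (T → ℝ) × ℝ := fun p => (fun i => A p.1 p.2 i, -b p.1 p.2)
  let f : Finset (S × Fin J) → Finset S := fun q => Finset.univ.filter fun ξ => ∀ j, (ξ, j) ∈ q
  have hsub : traces (feasibleSet A b '' {x | ∀ i ∉ T, x i = 0}) S ⊆ (signPatterns w).image f := by
    intro t ht
    obtain ⟨_, ⟨x, hx, rfl⟩, hxt⟩ := mem_traces.1 ht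
    obtain ⟨φ, hφ⟩ := exists_dual_apply_nonpos_iff_dotProduct_le hx
    refine mem_image.2 ⟨Finset.univ.filter fun p => φ (w p) ≤ 0,
      mem_filter.2 ⟨mem_univ _, φ, fun p => by simp⟩, ?_⟩
    ext ξ
    simp [f, w, hxt, hφ, feasibleSet, Matrix.mulVec]
  have hrank : Module.finrank ℝ ((T → ℝ) × ℝ) = #T + 1 := by simp
  calc _ ≤ #((signPatterns w).image f) := card_le_card hsub
    _ ≤ #(signPatterns w) := card_image_le
    _ ≤ _ := by simpa [hrank] using card_signPatterns_le w

lemma two_pow_card_le_of_shattersFam {n0 : ℕ} (hn0 : n0 ≤ n) {S : Finset Ξ}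
    (hS : ShattersFam (feasibleSet A b '' {x | {i | x i ≠ 0}.ncard ≤ n0} ∪ {Set.univ}) S) :
    2 ^ #S ≤ 1 + n.choose n0 * ∑ i ∈ Iic (n0 + 1), (#S * J).choose i := by
  classical
  have hsparse : feasibleSet A b '' {x | {i | x i ≠ 0}.ncard ≤ n0} ⊆
      ⋃ T ∈ powersetCard n0 Finset.univ, feasibleSet A b '' {x | ∀ i ∉ T, x i = 0} := by
    rintro _ ⟨x, hx, rfl⟩
    obtain ⟨T, hT, hxT⟩ := exists_mem_powersetCard_support_subset hx hn0
    exact Set.mem_biUnion hT ⟨x, hxT, rfl⟩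
  calc 2 ^ #S = #(traces (feasibleSet A b '' {x | {i | x i ≠ 0}.ncard ≤ n0} ∪ {Set.univ}) S) := by
        rw [hS.traces_eq_univ, card_univ, Fintype.card_finset, Fintype.card_coe]
    _ ≤ #(traces (feasibleSet A b '' {x | {i | x i ≠ 0}.ncard ≤ n0}) S) + 1 := by
        rw [traces_union]
        exact (Finset.card_union_le _ _).trans (add_le_add_right (card_traces_singleton_le _) _)
    _ ≤ ∑ T ∈ powersetCard n0 Finset.univ,
          #(traces (feasibleSet A b '' {x | ∀ i ∉ T, x i = 0}) S) + 1 := by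
        grw [traces_mono hsparse, traces_biUnion, card_biUnion_le]
    _ ≤ n.choose n0 * ∑ i ∈ Iic (n0 + 1), (#S * J).choose i + 1 := by
        grw [sum_le_card_nsmul _ _ _ fun T hT => (card_traces_feasibleSet_le A b T S).trans_eq
          (by rw [(mem_powersetCard_univ.1 hT)])]
        simp
    _ = _ := add_comm _ _

end FeasibleSets
lemma sum_Iic_choose_le_exp_mul_div_pow {N D : ℕ} (hD : 0 < D) (hDN : D ≤ N) :
    ∑ i ∈ Iic D, (N.choose i : ℝ) ≤ (exp 1 * N / D) ^ D := by
  have hN : (0 : ℝ) < N := by exact_mod_cast hD.trans_le hDN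
  set t : ℝ := D / N
  have ht0 : 0 < t := by positivity
  have ht1 : t ≤ 1 := div_le_one_of_le₀ (by exact_mod_cast hDN) hN.le
  -- Compare with the binomial expansion of `(t + 1) ^ N`, using `t ^ D ≤ t ^ i` for `i ≤ D`.
  have key : (∑ i ∈ Iic D, (N.choose i : ℝ)) * t ^ D ≤ exp 1 ^ D := calc
    _ ≤ ∑ i ∈ range (N + 1), t ^ i * 1 ^ (N - i) * N.choose i := by
      rw [sum_mul]
      refine (sum_le_sum fun i hi => ?_).trans <| sum_le_sum_of_subset_of_nonneg
        (fun i hi => mem_range.2 <| by have := mem_Iic.1 hi; omega) fun _ _ _ => by positivity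
      rw [one_pow, mul_one, mul_comm]
      exact mul_le_mul_of_nonneg_right (pow_le_pow_of_le_one ht0.le ht1 (mem_Iic.1 hi))
        (by positivity)
    _ = (t + 1) ^ N := (add_pow t 1 N).symm
    _ ≤ exp t ^ N := pow_le_pow_left₀ (by positivity) (by linarith [add_one_le_exp t]) N
    _ = exp 1 ^ D := by rw [← exp_nat_mul, ← exp_nat_mul, mul_div_cancel₀ _ hN.ne', mul_one]
  calc _ ≤ exp 1 ^ D / t ^ D := (le_div_iff₀ (by positivity)).2 key
    _ = _ := by rw [← div_pow, div_div_eq_mul_div]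

lemma choose_le_exp_mul_succ_div_pow {n n0 : ℕ} (hn0 : n0 ≤ n) :
    (n.choose n0 : ℝ) ≤ (exp 1 * (n + 1) / (n0 + 1)) ^ (n0 + 1) := calc
  (n.choose n0 : ℝ) ≤ (n + 1).choose (n0 + 1) := by
    exact_mod_cast (Nat.choose_succ_succ' n n0).symm ▸ Nat.le_add_right _ _
  _ ≤ ∑ i ∈ Iic (n0 + 1), ((n + 1).choose i : ℝ) :=
    single_le_sum (f := fun i => ((n + 1).choose i : ℝ)) (fun _ _ => by positivity)
      (mem_Iic.2 le_rfl)
  _ ≤ _ := by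
    simpa using sum_Iic_choose_le_exp_mul_div_pow (N := n + 1) (D := n0 + 1) n0.succ_pos
      (by omega)

lemma one_le_log_exp_div_log_two_mul {J : ℕ} (hJ : 1 ≤ J) :
    1 ≤ log (exp 1 / log 2 * J) := by
  have hl : 0 < log 2 := log_pos one_lt_two
  have hl1 : log 2 ≤ 1 := log_two_lt_d9.le.trans (by norm_num)
  have hJ' : (1 : ℝ) ≤ J := by exact_mod_cast hJ
  rw [le_log_iff_exp_le (by positivity)]
  calc exp 1 ≤ exp 1 / log 2 := le_div_self (exp_pos 1).le hl hl1
    _ ≤ exp 1 / log 2 * J := le_mul_of_one_le_right (by positivity) hJ'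

lemma one_le_log_mul_exp_add_exp_div {n n0 : ℕ} (hn0 : n0 ≤ n) :
    1 ≤ log ((n * exp 1 + exp 1) / (n0 + 1)) := by
  rw [le_log_iff_exp_le (by positivity), le_div_iff₀ (by positivity)]
  have : (n0 : ℝ) ≤ n := by exact_mod_cast hn0
  nlinarith [exp_pos 1]

lemma log_two_mul_le_of_two_pow_le {m n n0 J : ℕ} (hn0 : n0 ≤ n) (hm : n0 + 1 ≤ m * J)
    (h : 2 ^ m ≤ 1 + n.choose n0 * ∑ i ∈ Iic (n0 + 1), (m * J).choose i) :
    m * log 2 ≤ log 2 + (n0 + 1) * log ((n * exp 1 + exp 1) / (n0 + 1)) +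
      (n0 + 1) * log (exp 1 * (m * J) / (n0 + 1)) := by
  set B₁ : ℝ := (exp 1 * (n + 1) / (n0 + 1)) ^ (n0 + 1)
  set B₂ : ℝ := (exp 1 * (m * J) / (n0 + 1)) ^ (n0 + 1)
  have hm' : (n0 + 1 : ℝ) ≤ m * J := by exact_mod_cast hm
  have hB₁ : 1 ≤ B₁ := one_le_pow₀ <| (one_le_div (by positivity)).2 <| by
    have : (n0 : ℝ) ≤ n := by exact_mod_cast hn0
    nlinarith [add_one_le_exp 1]
  have hB₂ : 1 ≤ B₂ := one_le_pow₀ <| (one_le_div (by positivity)).2 <| by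
    nlinarith [add_one_le_exp 1]
  have hsum : ∑ i ∈ Iic (n0 + 1), ((m * J).choose i : ℝ) ≤ B₂ := by
    simpa using sum_Iic_choose_le_exp_mul_div_pow n0.succ_pos hm
  have h2 : (2 : ℝ) ^ m ≤ 2 * (B₁ * B₂) := calc
    (2 : ℝ) ^ m ≤ 1 + n.choose n0 * ∑ i ∈ Iic (n0 + 1), ((m * J).choose i : ℝ) := by
      exact_mod_cast h
    _ ≤ 1 + B₁ * B₂ := by
      gcongr
      exact choose_le_exp_mul_succ_div_pow hn0
    _ ≤ 2 * (B₁ * B₂) := by nlinarith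
  have := log_le_log (by positivity) h2
  rw [log_pow, log_mul two_ne_zero (by positivity), log_mul (by positivity) (by positivity),
    log_pow, log_pow] at this
  push_cast at this
  rw [show exp 1 * (n + 1) = n * exp 1 + exp 1 by ring] at this
  linarith

lemma mul_log_two_le_of_two_pow_le {m n n0 J : ℕ} (hn0 : n0 ≤ n) (hJ : 1 ≤ J)
    (h : 2 ^ m ≤ 1 + n.choose n0 * ∑ i ∈ Iic (n0 + 1), (m * J).choose i) :
    m * ((exp 1 - 1) * log 2) ≤ exp 1 * (log 2 + (n0 + 1) * log ((n * exp 1 + exp 1) / (n0 + 1))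
      + (n0 + 1) * log (exp 1 / log 2 * J)) := by
  set X : ℝ := (n * exp 1 + exp 1) / (n0 + 1)
  set y : ℝ := log (exp 1 / log 2 * J)
  have hl : 0 < log 2 := log_pos one_lt_two
  have hl1 : log 2 < 1 := log_two_lt_d9.trans (by norm_num)
  have he : 1 < exp 1 := one_lt_exp_iff.2 one_pos
  have hX : 1 ≤ log X := one_le_log_mul_exp_add_exp_div hn0
  have hy : 1 ≤ y := one_le_log_exp_div_log_two_mul hJ
  rcases le_or_gt (m * J) (n0 + 1) with hsmall | hlarge
  · have hm : (m : ℝ) ≤ n0 + 1 := by exact_mod_cast (Nat.le_mul_of_pos_right m hJ).trans hsmall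
    calc m * ((exp 1 - 1) * log 2) ≤ (n0 + 1) * ((exp 1 - 1) * log 2) :=
          mul_le_mul_of_nonneg_right hm (by nlinarith)
      _ ≤ (n0 + 1) * (exp 1 * log X) := mul_le_mul_of_nonneg_left (by nlinarith) (by positivity)
      _ ≤ _ := by nlinarith [mul_pos (by linarith : (0 : ℝ) < exp 1) hl,
                   mul_pos (by positivity : (0 : ℝ) < (n0 + 1) * exp 1) (by linarith : 0 < y)]
  · have hm : 0 < m := Nat.pos_of_ne_zero <| by rintro rfl; simp at hlarge
    have hlog := log_two_mul_le_of_two_pow_le hn0 hlarge.le h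
    set u : ℝ := m * log 2 / ((n0 + 1) * exp 1)
    -- `log` lies below its tangent line at `exp 1 ^ 2 * J / log 2`.
    have htangent : log (exp 1 * (m * J) / (n0 + 1)) ≤ u + y := by
      have hu : 0 < u := by positivity
      have hJ' : (0 : ℝ) < J := by exact_mod_cast hJ
      rw [show exp 1 * (m * J) / (n0 + 1) = u * (exp 1 * (exp 1 / log 2 * J)) by
          simp only [u]; field_simp,
        log_mul hu.ne' (by positivity), log_mul (by positivity) (by positivity), log_exp]
      linarith [log_le_sub_one_of_pos hu]
    calc m * ((exp 1 - 1) * log 2) = exp 1 * (m * log 2) - m * log 2 := by ring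
      _ ≤ exp 1 * (log 2 + (n0 + 1) * log X + (n0 + 1) * (u + y)) - m * log 2 := by
        gcongr
        exact hlog.trans (by gcongr)
      _ = _ := by simp only [u]; field_simp; ring

lemma le_of_two_pow_le_one_add_choose_mul {m n n0 J : ℕ} (hn0 : n0 ≤ n) (hJ : 1 ≤ J)
    (h : 2 ^ m ≤ 1 + n.choose n0 * ∑ i ∈ Iic (n0 + 1), (m * J).choose i) :
    (m : ℝ) ≤ exp 1 / ((exp 1 - 1) * log 2) * J *
      (2 * (n0 + 1) * logb 2 ((n * exp 1 + exp 1) / (n0 + 1))) * log (exp 1 / log 2 * J) := by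
  set X : ℝ := (n * exp 1 + exp 1) / (n0 + 1)
  set y : ℝ := log (exp 1 / log 2 * J)
  set P : ℝ := (n0 + 1) * logb 2 X * y
  have hl : 0 < log 2 := log_pos one_lt_two
  have hl' : log 2 < 0.7 := log_two_lt_d9.trans (by norm_num)
  have he : 1 < exp 1 := one_lt_exp_iff.2 one_pos
  have hX : 1 ≤ log X := one_le_log_mul_exp_add_exp_div hn0
  have hy : 1 ≤ y := one_le_log_exp_div_log_two_mul hJ
  have hJ' : (1 : ℝ) ≤ J := by exact_mod_cast hJ
  have hk : (1 : ℝ) ≤ n0 + 1 := by simp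
  have hlP : log 2 * P = (n0 + 1) * log X * y := by
    simp only [P, ← log_div_log]; field_simp
  have hlP_ge : (n0 + 1) * log X ≤ log 2 * P := by
    rw [hlP]; exact le_mul_of_one_le_right (by positivity) hy
  have hlP_ge' : (n0 + 1) * y ≤ log 2 * P := by
    rw [hlP]; nlinarith [mul_le_mul_of_nonneg_left hX (by positivity : (0 : ℝ) ≤ (n0 + 1) * y)]
  have hP : 1 ≤ log 2 * P := by
    rw [hlP]; exact one_le_mul_of_one_le_of_one_le (one_le_mul_of_one_le_of_one_le hk hX) hy
  have hP0 : 0 < P := pos_of_mul_pos_right (one_pos.trans_le hP) hl.le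
  have hl_le : log 2 ≤ log 2 * (log 2 * P) := le_mul_of_one_le_right hl.le hP
  -- Each summand is at most `log 2 * P` or `log 2 ^ 2 * P`, and `2 log 2 + log 2 ^ 2 < 2`.
  have hsum : log 2 + (n0 + 1) * log X + (n0 + 1) * y ≤ 2 * P := by
    nlinarith [mul_pos (by nlinarith : 0 < 2 - 2 * log 2 - log 2 * log 2) hP0]
  rw [show exp 1 / ((exp 1 - 1) * log 2) * J * (2 * (n0 + 1) * logb 2 X) * y
      = exp 1 * (2 * P) * J / ((exp 1 - 1) * log 2) by simp only [P]; field_simp,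
    le_div_iff₀ (by nlinarith)]
  calc m * ((exp 1 - 1) * log 2) ≤ exp 1 * (log 2 + (n0 + 1) * log X + (n0 + 1) * y) :=
        mul_log_two_le_of_two_pow_le hn0 hJ h
    _ ≤ exp 1 * (2 * P) := by gcongr
    _ ≤ exp 1 * (2 * P) * J := le_mul_of_one_le_right (by positivity) hJ'

theorem statement_14_general {Ξ : Type*} (n n0 J : ℕ) (hn0 : n0 ≤ n) (hJ : 1 ≤ J)
    (A : Ξ → Matrix (Fin J) (Fin n) ℝ) (b : Ξ → Fin J → ℝ) :
    ∀ S : Finset Ξ,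
      ShattersFam
        (((fun x : Fin n → ℝ => {ξ | ∀ j : Fin J, (A ξ).mulVec x j ≤ b ξ j}) ''
            {x : Fin n → ℝ | {i | x i ≠ 0}.ncard ≤ n0}) ∪ {Set.univ}) S →
      (S.card : ℝ) ≤ Real.exp 1 / ((Real.exp 1 - 1) * Real.log 2) * J *
        (2 * (n0 + 1) * Real.logb 2 ((n * Real.exp 1 + Real.exp 1) / (n0 + 1))) *
        Real.log (Real.exp 1 / Real.log 2 * J) :=
  fun _ hS => le_of_two_pow_le_one_add_choose_mul hn0 hJ (two_pow_card_le_of_shattersFam A b hn0 hS)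

/-- VC bound with sparse first-stage decisions.
For `n₀`-sparse `x`, `H_x = ∩_{j≤J} {ξ : (A_ξ x)_j ≤ (b_ξ)_j}` and
`𝓗 = {H_x : ‖x‖₀ ≤ n₀} ∪ {Ξ}`, we have
`d_VC(𝓗) ≤ (e/((e−1) log 2)) J (2(n₀+1) log₂((n e + e)/(n₀+1))) log((e/log 2) J)`
(stated via shattered sets). -/
theorem statement_14 {Ξ : Type*} (n n0 J : ℕ) (hn : 1 ≤ n) (hn0 : n0 ≤ n) (hJ : 1 ≤ J)
    (A : Ξ → Matrix (Fin J) (Fin n) ℝ) (b : Ξ → Fin J → ℝ) :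
    ∀ S : Finset Ξ,
      ShattersFam
        (((fun x : Fin n → ℝ => {ξ | ∀ j : Fin J, (A ξ).mulVec x j ≤ b ξ j}) ''
            {x : Fin n → ℝ | {i | x i ≠ 0}.ncard ≤ n0}) ∪ {Set.univ}) S →
      (S.card : ℝ) ≤ Real.exp 1 / ((Real.exp 1 - 1) * Real.log 2) * J *
        (2 * (n0 + 1) * Real.logb 2 ((n * Real.exp 1 + Real.exp 1) / (n0 + 1))) *
        Real.log (Real.exp 1 / Real.log 2 * J) :=
  statement_14_general n n0 J hn0 hJ A b
end

section
/- For every integer n ≥ 1, every real θ ≥ 0, and every ε ∈ (0,1): Σ_{i=0}^{n−1} (θ^i / i!) · e^{−(3/4)θ} ≤ 2·(12/ε)^n. -/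
open Real

/-
Each term is bounded through `(cθ)^i / i! ≤ e^{cθ}` with `c = 3/4`, giving `(4/3)^i ≤ (12/ε)^i`,
and a geometric sum with ratio at least `2` is dominated by its next term.
-/

open Finset in
theorem geom_sum_le_pow_of_two_le {R : Type*} [Semiring R] [PartialOrder R] [IsOrderedRing R]
    {r : R} (hr : 2 ≤ r) (n : ℕ) : ∑ i ∈ range n, r ^ i ≤ r ^ n := by
  induction n with
  | zero => simp
  | succ n ih =>
    calc ∑ i ∈ range (n + 1), r ^ i = ∑ i ∈ range n, r ^ i + r ^ n := sum_range_succ _ _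
      _ ≤ 2 * r ^ n := by rw [two_mul]; gcongr
      _ ≤ r ^ (n + 1) := by
        rw [pow_succ']
        exact mul_le_mul_of_nonneg_right hr (pow_nonneg (zero_le_two.trans hr) n)

open Nat in
theorem Real.pow_div_factorial_mul_exp_neg_mul_le {c x : ℝ} (hc : 0 < c) (hx : 0 ≤ x) (i : ℕ) :
    x ^ i / i ! * exp (-c * x) ≤ c⁻¹ ^ i := by
  have hexp : (c * x) ^ i / i ! ≤ exp (c * x) := pow_div_factorial_le_exp _ (by positivity) i
  rw [neg_mul, exp_neg, ← div_eq_mul_inv, div_le_iff₀ (exp_pos _)]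
  calc x ^ i / i ! = c⁻¹ ^ i * ((c * x) ^ i / i !) := by
        rw [mul_pow, ← mul_div_assoc, ← mul_assoc, ← mul_pow, inv_mul_cancel₀ hc.ne', one_pow,
          one_mul]
    _ ≤ c⁻¹ ^ i * exp (c * x) := by gcongr

theorem statement_16_general (n : ℕ) (θ : ℝ) (hθ : 0 ≤ θ)
    (ε : ℝ) (hε : ε ∈ Set.Ioo (0 : ℝ) 1) :
    ∑ i ∈ Finset.range n, θ ^ i / (Nat.factorial i : ℝ) * Real.exp (-(3 / 4) * θ) ≤
      2 * (12 / ε) ^ n := by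
  obtain ⟨hε0, hε1⟩ := hε
  have h12 : (12 : ℝ) ≤ 12 / ε := by
    rw [le_div_iff₀ hε0]
    linarith
  have hterm (i : ℕ) :
      θ ^ i / (Nat.factorial i : ℝ) * Real.exp (-(3 / 4) * θ) ≤ (12 / ε) ^ i :=
    (pow_div_factorial_mul_exp_neg_mul_le (by norm_num) hθ i).trans
      (pow_le_pow_left₀ (by norm_num) (by norm_num; linarith) i)
  calc ∑ i ∈ Finset.range n, θ ^ i / (Nat.factorial i : ℝ) * Real.exp (-(3 / 4) * θ)
      ≤ ∑ i ∈ Finset.range n, (12 / ε) ^ i := Finset.sum_le_sum fun i _ => hterm i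
    _ ≤ (12 / ε) ^ n := geom_sum_le_pow_of_two_le (by linarith) n
    _ ≤ 2 * (12 / ε) ^ n := le_mul_of_one_le_left (by positivity) one_le_two

/-- Key analytic inequality for the verifiable example.
For every integer `n ≥ 1`, real `θ ≥ 0` and `ε ∈ (0,1)`:
`Σ_{i=0}^{n−1} (θ^i / i!) e^{−(3/4)θ} ≤ 2 (12/ε)^n`. -/
theorem statement_16 (n : ℕ) (hn : 1 ≤ n) (θ : ℝ) (hθ : 0 ≤ θ)
    (ε : ℝ) (hε : ε ∈ Set.Ioo (0 : ℝ) 1) :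
    ∑ i ∈ Finset.range n, θ ^ i / (Nat.factorial i : ℝ) * Real.exp (-(3 / 4) * θ) ≤
      2 * (12 / ε) ^ n :=
  statement_16_general n θ hθ ε hε
end

section
/- Let n ≥ 1 and N ≥ 1 be integers and let {U_{ij} : 1 ≤ i ≤ n, 1 ≤ j ≤ N} be independent random variables, each uniformly distributed on [0,1]. Then for every ε ∈ (0,1): ℙ( 1 − ∏_{i=1}^{n} max_{1≤j≤N} U_{ij} > ε ) = Σ_{i=0}^{n−1} (N·λ)^i / i! · e^{−N·λ}, where λ = log(1/(1−ε)). -/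
/-!
Write `M i = max_j U i j`. Since `M i ≤ x` iff `U i j ≤ x` for all `j`, the `M i` are
independent with `ℙ(M i ≤ x) = x ^ N` on `[0, 1]`, i.e. with density `N x ^ (N - 1)` there.
Conditioning on the first factor, `G n t := ℙ(∏_{i<n} M i < t)` satisfies
`G (n + 1) t = ∫ G n (t / x) N x ^ (N - 1) dx` with `G n s = 1` for `s > 1`, and induction gives
`G n t = t ^ N Σ_{i<n} (N log (1 / t)) ^ i / i!` for `t ∈ (0, 1]`: the key point is that
`y ↦ Σ_{i≤n} y ^ i / i!` has derivative `Σ_{i<n} y ^ i / i!`. At `t = 1 - ε`, `t ^ N = exp (-N λ)`.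
-/

open MeasureTheory ProbabilityTheory Real Set

noncomputable def expPartialSum (n : ℕ) (y : ℝ) : ℝ :=
  ∑ i ∈ Finset.range n, y ^ i / (Nat.factorial i : ℝ)

namespace expPartialSum

lemma zero_left (y : ℝ) : expPartialSum 0 y = 0 := by
  simp [expPartialSum]

lemma succ_zero_right (n : ℕ) : expPartialSum (n + 1) 0 = 1 := by
  simp [expPartialSum, Finset.sum_range_succ']

lemma nonneg (n : ℕ) {y : ℝ} (hy : 0 ≤ y) : 0 ≤ expPartialSum n y :=
  Finset.sum_nonneg fun i _ => by positivity

lemma hasDerivAt_succ (n : ℕ) (y : ℝ) :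
    HasDerivAt (expPartialSum (n + 1)) (expPartialSum n y) y := by
  have h : ∀ i ∈ Finset.range (n + 1), HasDerivAt (fun y : ℝ => y ^ i / (Nat.factorial i : ℝ))
      ((i : ℝ) * y ^ (i - 1) / (Nat.factorial i : ℝ)) y :=
    fun i _ => (hasDerivAt_pow i y).div_const _
  have hsum : ∑ i ∈ Finset.range (n + 1), (i : ℝ) * y ^ (i - 1) / (Nat.factorial i : ℝ)
      = expPartialSum n y := by
    rw [Finset.sum_range_succ', expPartialSum]
    simp only [Nat.cast_zero, zero_mul, zero_div, add_zero, Nat.cast_add_one, Nat.add_sub_cancel,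
      Nat.factorial_succ, Nat.cast_mul]
    refine Finset.sum_congr rfl fun i _ => ?_
    field_simp
  unfold expPartialSum at hsum ⊢
  exact hsum ▸ HasDerivAt.fun_sum h

lemma continuous (n : ℕ) : Continuous (expPartialSum n) := by
  unfold expPartialSum; fun_prop

end expPartialSum

lemma ofReal_eq_ofReal_add_setLIntegral_Ioc {f F : ℝ → ℝ} {a b : ℝ} (hab : a ≤ b)
    (hF : ∀ x ∈ Icc a b, HasDerivAt F (f x) x) (hf : ContinuousOn f (Icc a b))
    (hf0 : ∀ x ∈ Ioc a b, 0 ≤ f x) (hFa : 0 ≤ F a) :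
    ENNReal.ofReal (F b) = ENNReal.ofReal (F a) + ∫⁻ x in Ioc a b, ENNReal.ofReal (f x) := by
  have hftc : ∫ x in Ioc a b, f x = F b - F a := by
    rw [← intervalIntegral.integral_of_le hab]
    refine intervalIntegral.integral_eq_sub_of_hasDerivAt (by rwa [uIcc_of_le hab]) ?_
    exact (hf.mono (by rw [uIcc_of_le hab])).intervalIntegrable
  have hint : 0 ≤ ∫ x in Ioc a b, f x := setIntegral_nonneg measurableSet_Ioc hf0
  rw [← ofReal_integral_eq_lintegral_ofReal
      ((hf.integrableOn_Icc).mono_set Ioc_subset_Icc_self)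
      ((ae_restrict_iff' measurableSet_Ioc).2 (ae_of_all _ hf0)),
    ← ENNReal.ofReal_add hFa hint, hftc, add_sub_cancel]

lemma ofReal_expPartialSum_succ_eq_one_add_setLIntegral (n : ℕ) {c t : ℝ} (hc : 0 ≤ c)
    (ht0 : 0 < t) (ht1 : t ≤ 1) :
    ENNReal.ofReal (expPartialSum (n + 1) (c * log (1 / t)))
      = 1 + ∫⁻ x in Ioc t 1,
          ENNReal.ofReal (expPartialSum n (c * (log x - log t)) * (c * x⁻¹)) := by
  have hne : ∀ x ∈ Icc t 1, x ≠ 0 := fun x hx => (ht0.trans_le hx.1).ne'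
  have hderiv : ∀ x ∈ Icc t 1, HasDerivAt (fun x => expPartialSum (n + 1) (c * (log x - log t)))
      (expPartialSum n (c * (log x - log t)) * (c * x⁻¹)) x := fun x hx =>
    (expPartialSum.hasDerivAt_succ n _).comp x
      (((hasDerivAt_log (hne x hx)).sub_const (log t)).const_mul c)
  have hcont : ContinuousOn (fun x => expPartialSum n (c * (log x - log t)) * (c * x⁻¹))
      (Icc t 1) := by
    have := expPartialSum.continuous n
    fun_prop (disch := assumption)
  have hnonneg : ∀ x ∈ Ioc t 1, 0 ≤ expPartialSum n (c * (log x - log t)) * (c * x⁻¹) := by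
    intro x hx
    have hx0 : 0 < x := ht0.trans hx.1
    have := expPartialSum.nonneg n (mul_nonneg hc (sub_nonneg.2 (log_le_log ht0 hx.1.le)))
    positivity
  have hftc := ofReal_eq_ofReal_add_setLIntegral_Ioc ht1 hderiv hcont hnonneg
  simp only [sub_self, mul_zero, expPartialSum.succ_zero_right, ENNReal.ofReal_one] at hftc
  rw [← hftc zero_le_one, log_one, zero_sub, one_div, log_inv]

lemma measure_pi_prod_lt_succ (μ : Measure ℝ) [SigmaFinite μ] (n : ℕ) (t : ℝ) :
    Measure.pi (fun _ : Fin (n + 1) => μ) {v | ∏ i, v i < t}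
      = ∫⁻ x, Measure.pi (fun _ : Fin n => μ) {w | x * ∏ i, w i < t} ∂μ := by
  set T : Set (ℝ × (Fin n → ℝ)) := {p | p.1 * ∏ i, p.2 i < t}
  have hT : MeasurableSet T := measurableSet_lt (by fun_prop) measurable_const
  have hpre : {v : Fin (n + 1) → ℝ | ∏ i, v i < t}
      = MeasurableEquiv.piFinSuccAbove (fun _ => ℝ) 0 ⁻¹' T := by
    ext v
    simp [T, Fin.prod_univ_succ, MeasurableEquiv.piFinSuccAbove_apply, Fin.tail]
  rw [hpre, (measurePreserving_piFinSuccAbove (fun _ => μ) 0).measure_preimage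
    hT.nullMeasurableSet, Measure.prod_apply hT]
  rfl

lemma measure_pi_prod_lt_eq_one (μ : Measure ℝ) [IsProbabilityMeasure μ] (hμ : μ (Icc 0 1) = 1)
    (n : ℕ) {x t : ℝ} (hx : 0 ≤ x) (hxt : x < t) :
    Measure.pi (fun _ : Fin n => μ) {w | x * ∏ i, w i < t} = 1 := by
  refine le_antisymm prob_le_one ?_
  calc 1 = Measure.pi (fun _ : Fin n => μ) (univ.pi fun _ => Icc 0 1) := by
        rw [Measure.pi_pi]; simp [hμ]
    _ ≤ _ := measure_mono fun w hw => by
        have hprod : ∏ i, w i ≤ 1 :=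
          Finset.prod_le_one (fun i _ => (hw i (mem_univ i)).1) (fun i _ => (hw i (mem_univ i)).2)
        exact (mul_le_of_le_one_right hx hprod).trans_lt hxt

noncomputable def maxUniformLaw (N : ℕ) : Measure ℝ :=
  (volume.restrict (Ioc 0 1)).withDensity fun x => ENNReal.ofReal (N * x ^ (N - 1))

namespace maxUniformLaw

variable {N : ℕ} [NeZero N]

lemma setLIntegral_density_Ioc {b : ℝ} (hb : 0 ≤ b) :
    ∫⁻ x in Ioc 0 b, ENNReal.ofReal (N * x ^ (N - 1)) = ENNReal.ofReal (b ^ N) := by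
  rw [ofReal_eq_ofReal_add_setLIntegral_Ioc hb (fun x _ => hasDerivAt_pow N x)
    (by fun_prop) (fun x hx => by have := hx.1.le; positivity) (by positivity)]
  simp [NeZero.ne N]

omit [NeZero N] in
lemma apply_eq_setLIntegral {s : Set ℝ} (hs : MeasurableSet s) :
    maxUniformLaw N s = ∫⁻ x in s ∩ Ioc 0 1, ENNReal.ofReal (N * x ^ (N - 1)) := by
  rw [maxUniformLaw, withDensity_apply _ hs, Measure.restrict_restrict hs]

instance : IsProbabilityMeasure (maxUniformLaw N) := by
  constructor
  rw [apply_eq_setLIntegral MeasurableSet.univ, univ_inter, setLIntegral_density_Ioc zero_le_one,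
    one_pow, ENNReal.ofReal_one]

lemma apply_Iic (x : ℝ) : maxUniformLaw N (Iic x) = ENNReal.ofReal (min x 1) ^ N := by
  have hset : Iic x ∩ Ioc 0 1 = Ioc 0 (min x 1) := by
    ext y; simp only [mem_inter_iff, mem_Iic, mem_Ioc, le_min_iff]; tauto
  rw [apply_eq_setLIntegral measurableSet_Iic, hset]
  rcases le_or_gt x 0 with hx | hx
  · have hmin : min x 1 ≤ 0 := min_le_of_left_le hx
    rw [Ioc_eq_empty hmin.not_gt, ENNReal.ofReal_of_nonpos hmin, zero_pow (NeZero.ne N)]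
    simp
  · rw [setLIntegral_density_Ioc (le_min hx.le zero_le_one), ENNReal.ofReal_pow
      (le_min hx.le zero_le_one)]

omit [NeZero N] in
lemma lintegral_eq {f : ℝ → ENNReal} (hf : Measurable f) :
    ∫⁻ x, f x ∂maxUniformLaw N = ∫⁻ x in Ioc 0 1, ENNReal.ofReal (N * x ^ (N - 1)) * f x :=
  lintegral_withDensity_eq_lintegral_mul _ (by fun_prop) hf

lemma apply_Icc_zero_one : maxUniformLaw N (Icc 0 1) = 1 := by
  rw [apply_eq_setLIntegral measurableSet_Icc, inter_eq_right.2 Ioc_subset_Icc_self,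
    setLIntegral_density_Ioc zero_le_one, one_pow, ENNReal.ofReal_one]

lemma measure_pi_prod_lt (n : ℕ) {t : ℝ} (ht0 : 0 < t) (ht1 : t ≤ 1) :
    Measure.pi (fun _ : Fin n => maxUniformLaw N) {v | ∏ i, v i < t}
      = ENNReal.ofReal (t ^ N * expPartialSum n (N * log (1 / t))) := by
  induction n generalizing t with
  | zero => simp [ht1.not_gt, expPartialSum.zero_left]
  | succ n ih =>
    set g : ℝ → ENNReal := fun x => Measure.pi (fun _ : Fin n => maxUniformLaw N)
      {w | x * ∏ i, w i < t}
    have hg : Measurable g := measurable_measure_prodMk_left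
      (measurableSet_lt (by fun_prop) measurable_const :
        MeasurableSet {p : ℝ × (Fin n → ℝ) | p.1 * ∏ i, p.2 i < t})
    have hlow : ∫⁻ x in Ioc 0 t, ENNReal.ofReal (N * x ^ (N - 1)) * g x
        = ENNReal.ofReal (t ^ N) := by
      have hg1 : ∀ x ∈ Ioo 0 t, g x = 1 := fun x hx =>
        measure_pi_prod_lt_eq_one _ apply_Icc_zero_one n hx.1.le hx.2
      rw [← setLIntegral_congr Ioo_ae_eq_Ioc,
        setLIntegral_congr_fun measurableSet_Ioo fun x hx => by rw [hg1 x hx, mul_one],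
        setLIntegral_congr Ioo_ae_eq_Ioc, setLIntegral_density_Ioc ht0.le]
    have hhigh : ∀ x ∈ Ioc t 1, ENNReal.ofReal (N * x ^ (N - 1)) * g x
        = ENNReal.ofReal (t ^ N) *
          ENNReal.ofReal (expPartialSum n (N * (log x - log t)) * (N * x⁻¹)) := by
      intro x hx
      have hx0 : 0 < x := ht0.trans hx.1
      have hgx : g x = Measure.pi (fun _ : Fin n => maxUniformLaw N) {w | ∏ i, w i < t / x} := by
        simp only [g, lt_div_iff₀ hx0, mul_comm x]
      have hdensity (E : ℝ) : N * x ^ (N - 1) * ((t / x) ^ N * E) = t ^ N * (E * (N * x⁻¹)) := by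
        rw [pow_sub₀ x hx0.ne' (Nat.one_le_iff_ne_zero.2 (NeZero.ne N)), div_pow]
        field_simp
      rw [hgx, ih (div_pos ht0 hx0) ((div_le_one hx0).2 hx.1.le),
        ← ENNReal.ofReal_mul (by positivity),
        one_div_div, log_div hx0.ne' ht0.ne', hdensity, ENNReal.ofReal_mul (by positivity)]
    rw [measure_pi_prod_lt_succ, lintegral_eq hg, ← Ioc_union_Ioc_eq_Ioc ht0.le ht1,
      lintegral_union measurableSet_Ioc (Ioc_disjoint_Ioc_of_le le_rfl), hlow,
      setLIntegral_congr_fun measurableSet_Ioc hhigh,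
      lintegral_const_mul' _ _ ENNReal.ofReal_ne_top,
      ENNReal.ofReal_mul (by positivity), ofReal_expPartialSum_succ_eq_one_add_setLIntegral n
        (Nat.cast_nonneg N) ht0 ht1, mul_add, mul_one]

end maxUniformLaw

lemma volume_restrict_Icc_Iic (x : ℝ) :
    volume.restrict (Icc (0 : ℝ) 1) (Iic x) = ENNReal.ofReal (min x 1) := by
  have hset : Iic x ∩ Icc (0 : ℝ) 1 = Icc 0 (min x 1) := by
    ext y; simp only [mem_inter_iff, mem_Iic, mem_Icc, le_min_iff]; tauto
  rw [Measure.restrict_apply measurableSet_Iic, hset, volume_Icc, sub_zero]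

lemma map_iSup_eq_pi_maxUniformLaw {Ω ι : Type*} [MeasurableSpace Ω] [Fintype ι]
    (P : Measure Ω) [IsProbabilityMeasure P] {N : ℕ} [NeZero N] (U : ι → Fin N → Ω → ℝ)
    (hmeas : ∀ i j, Measurable (U i j))
    (hindep : iIndepFun (fun p : ι × Fin N => U p.1 p.2) P)
    (hunif : ∀ i j, P.map (U i j) = volume.restrict (Icc 0 1)) :
    P.map (fun ω i => ⨆ j, U i j ω) = Measure.pi fun _ => maxUniformLaw N := by
  have hM : Measurable fun ω i => ⨆ j, U i j ω :=
    measurable_pi_lambda _ fun i => Measurable.iSup fun j => hmeas i j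
  refine (Measure.pi_eq_generateFrom
    (fun _ => (borel_eq_generateFrom_Iic ℝ).symm.trans BorelSpace.measurable_eq.symm)
    (fun _ => isPiSystem_Iic)
    (fun _ => ⟨fun k => Iic (k : ℝ), fun k => mem_range_self _, fun k => measure_lt_top _ _,
      iUnion_eq_univ_iff.2 fun x => ⟨⌈x⌉₊, mem_Iic.2 (Nat.le_ceil x)⟩⟩)
    fun s hs => ?_).symm
  choose x hx using hs
  have hpre : (fun ω i => ⨆ j, U i j ω) ⁻¹' univ.pi s
      = ⋂ p : ι × Fin N, U p.1 p.2 ⁻¹' Iic (x p.1) := by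
    ext ω
    simp only [← hx, mem_preimage, mem_univ_pi, mem_Iic, mem_iInter, Prod.forall,
      ciSup_le_iff (finite_range _).bddAbove]
  rw [Measure.map_apply hM (MeasurableSet.univ_pi fun i => hx i ▸ measurableSet_Iic), hpre,
    hindep.meas_iInter fun p => ⟨Iic (x p.1), measurableSet_Iic, rfl⟩, Fintype.prod_prod_type]
  refine Finset.prod_congr rfl fun i _ => ?_
  simp only [← Measure.map_apply (hmeas _ _) measurableSet_Iic, hunif, volume_restrict_Icc_Iic,
    Finset.prod_const, Finset.card_univ, Fintype.card_fin, ← hx i, maxUniformLaw.apply_Iic]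

theorem statement_18_general {Ω : Type*} [MeasurableSpace Ω] (P : Measure Ω) [IsProbabilityMeasure P]
    (n N : ℕ) (hN : 1 ≤ N)
    (U : Fin n → Fin N → Ω → ℝ)
    (hmeas : ∀ i j, Measurable (U i j))
    (hindep : iIndepFun (fun p : Fin n × Fin N => U p.1 p.2) P)
    (hunif : ∀ i j, Measure.map (U i j) P = volume.restrict (Set.Icc (0 : ℝ) 1))
    (ε : ℝ) (hε : ε ∈ Set.Ioo (0 : ℝ) 1) :
    P {ω | ε < 1 - ∏ i : Fin n, ⨆ j : Fin N, U i j ω} =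
      ENNReal.ofReal (∑ i ∈ Finset.range n,
        ((N : ℝ) * Real.log (1 / (1 - ε))) ^ i / (Nat.factorial i : ℝ) *
          Real.exp (-((N : ℝ) * Real.log (1 / (1 - ε))))) := by
  have : NeZero N := ⟨by omega⟩
  have ht0 : 0 < 1 - ε := sub_pos.2 hε.2
  have hM : Measurable fun ω i => ⨆ j, U i j ω :=
    measurable_pi_lambda _ fun i => Measurable.iSup fun j => hmeas i j
  have hevent : {ω | ε < 1 - ∏ i, ⨆ j, U i j ω}
      = (fun ω i => ⨆ j, U i j ω) ⁻¹' {v | ∏ i, v i < 1 - ε} := by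
    ext ω
    exact (lt_sub_comm : ε < 1 - _ ↔ _)
  have hpow : Real.exp (-((N : ℝ) * Real.log (1 / (1 - ε)))) = (1 - ε) ^ N := by
    rw [one_div, log_inv, mul_neg, neg_neg, exp_nat_mul, exp_log ht0]
  rw [hevent, ← Measure.map_apply hM (measurableSet_lt (by fun_prop) measurable_const),
    map_iSup_eq_pi_maxUniformLaw P U hmeas hindep hunif,
    maxUniformLaw.measure_pi_prod_lt n ht0 (sub_le_self 1 hε.1.le), expPartialSum,
    Finset.mul_sum, hpow]
  exact congrArg ENNReal.ofReal (Finset.sum_congr rfl fun i _ => mul_comm _ _)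

/-- Exact violation probability in the verifiable example.
If `U_{ij}`, `1 ≤ i ≤ n`, `1 ≤ j ≤ N`, are independent Uniform[0,1] random variables, then
for every `ε ∈ (0,1)`,
`ℙ(1 − ∏_i max_j U_{ij} > ε) = Σ_{i=0}^{n−1} (Nλ)^i/i! · e^{−Nλ}` with `λ = log(1/(1−ε))`. -/
theorem statement_18 {Ω : Type*} [MeasurableSpace Ω] (P : Measure Ω) [IsProbabilityMeasure P]
    (n N : ℕ) (hn : 1 ≤ n) (hN : 1 ≤ N)
    (U : Fin n → Fin N → Ω → ℝ)
    (hmeas : ∀ i j, Measurable (U i j))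
    (hindep : iIndepFun (fun p : Fin n × Fin N => U p.1 p.2) P)
    (hunif : ∀ i j, Measure.map (U i j) P = volume.restrict (Set.Icc (0 : ℝ) 1))
    (ε : ℝ) (hε : ε ∈ Set.Ioo (0 : ℝ) 1) :
    P {ω | ε < 1 - ∏ i : Fin n, ⨆ j : Fin N, U i j ω} =
      ENNReal.ofReal (∑ i ∈ Finset.range n,
        ((N : ℝ) * Real.log (1 / (1 - ε))) ^ i / (Nat.factorial i : ℝ) *
          Real.exp (-((N : ℝ) * Real.log (1 / (1 - ε))))) :=
  statement_18_general P n N hN U hmeas hindep hunif ε hε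
end

section
/- For all integers N ≥ 1 and n ≥ 1, every ε ∈ (0,1), and every real d ≥ n: Σ_{k=0}^{n−1} (N·λ)^k / k! · e^{−N·λ} ≤ 2·exp(−Nε/4)·(12/ε)^d, where λ = log(1/(1−ε)). -/
open Real

/-- The exact violation probability is dominated by the VC bound.
For all integers `N, n ≥ 1`, `ε ∈ (0,1)` and real `d ≥ n`, with `λ = log(1/(1−ε))`:
`Σ_{k=0}^{n−1} (Nλ)^k/k! · e^{−Nλ} ≤ 2 exp(−Nε/4) (12/ε)^d`. -/
theorem statement_19 (N n : ℕ) (hN : 1 ≤ N) (hn : 1 ≤ n)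
    (ε : ℝ) (hε : ε ∈ Set.Ioo (0 : ℝ) 1) (d : ℝ) (hd : (n : ℝ) ≤ d) :
    ∑ k ∈ Finset.range n,
        ((N : ℝ) * Real.log (1 / (1 - ε))) ^ k / (Nat.factorial k : ℝ) *
          Real.exp (-((N : ℝ) * Real.log (1 / (1 - ε)))) ≤
      2 * Real.exp (-((N : ℝ) * ε) / 4) * (12 / ε) ^ d := by
  obtain ⟨hε0, hε1⟩ := hε
  have h1ε : (0:ℝ) < 1 - ε := by linarith
  set L : ℝ := (N : ℝ) * Real.log (1 / (1 - ε)) with hL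
  have hlog : ε ≤ Real.log (1 / (1 - ε)) := by
    rw [Real.log_div one_ne_zero (ne_of_gt h1ε), Real.log_one]
    have := Real.log_le_sub_one_of_pos h1ε
    linarith
  have hN1 : (1:ℝ) ≤ (N:ℝ) := by exact_mod_cast hN
  have hNε : (N:ℝ) * ε ≤ L := by
    have : (N:ℝ) * ε ≤ (N:ℝ) * Real.log (1 / (1 - ε)) := by
      apply mul_le_mul_of_nonneg_left hlog (by linarith)
    simpa [hL] using this
  have hL0 : 0 ≤ L := le_trans (by positivity) hNε
  -- Step 1: sum ≤ (4/3)^n * exp (3L/4)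
  have hsum : ∑ k ∈ Finset.range n, L ^ k / (Nat.factorial k : ℝ)
      ≤ (4/3 : ℝ) ^ n * Real.exp (3 * L / 4) := by
    have h1 : ∑ k ∈ Finset.range n, L ^ k / (Nat.factorial k : ℝ)
        ≤ ∑ k ∈ Finset.range n, (4/3 : ℝ) ^ n * ((3 * L / 4) ^ k / (Nat.factorial k : ℝ)) := by
      apply Finset.sum_le_sum
      intro k hk
      have hkn : k ≤ n := le_of_lt (Finset.mem_range.mp hk)
      have key : L ^ k ≤ (4/3 : ℝ) ^ n * (3 * L / 4) ^ k := by
        have : (3 * L / 4) ^ k = (3/4 : ℝ)^k * L ^ k := by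
          rw [← mul_pow]; ring_nf
        rw [this, ← mul_assoc]
        have h2 : (1:ℝ) ≤ (4/3 : ℝ) ^ n * (3/4 : ℝ)^k := by
          have : (4/3 : ℝ) ^ k ≤ (4/3 : ℝ) ^ n :=
            pow_le_pow_right₀ (by norm_num) hkn
          have hk4 : (4/3 : ℝ)^k * (3/4:ℝ)^k = 1 := by
            rw [← mul_pow]; norm_num
          nlinarith [pow_pos (show (0:ℝ) < 3/4 by norm_num) k,
            pow_pos (show (0:ℝ) < 4/3 by norm_num) k]
        nlinarith [pow_nonneg hL0 k, pow_pos (show (0:ℝ) < 4/3 by norm_num) n,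
          pow_nonneg (show (0:ℝ) ≤ 3/4 by norm_num) k]
      have hfac : (0:ℝ) < (Nat.factorial k : ℝ) := by
        exact_mod_cast Nat.factorial_pos k
      rw [div_le_iff₀ hfac] at *
      calc L ^ k ≤ (4/3 : ℝ) ^ n * (3 * L / 4) ^ k := key
        _ = (4/3 : ℝ) ^ n * ((3 * L / 4) ^ k / (Nat.factorial k : ℝ)) * (Nat.factorial k : ℝ) := by
            field_simp
    rw [← Finset.mul_sum] at h1
    refine h1.trans ?_
    apply mul_le_mul_of_nonneg_left _ (by positivity)
    exact Real.sum_le_exp_of_nonneg (by linarith) n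
  -- Step 2: combine
  rw [← Finset.sum_mul]
  have hexp : Real.exp (3 * L / 4) * Real.exp (-L) = Real.exp (-L/4) := by
    rw [← Real.exp_add]; ring_nf
  have step : (∑ k ∈ Finset.range n, L ^ k / (Nat.factorial k : ℝ)) * Real.exp (-L)
      ≤ (4/3 : ℝ) ^ n * Real.exp (-L/4) := by
    calc (∑ k ∈ Finset.range n, L ^ k / (Nat.factorial k : ℝ)) * Real.exp (-L)
        ≤ (4/3 : ℝ) ^ n * Real.exp (3 * L / 4) * Real.exp (-L) := by
          apply mul_le_mul_of_nonneg_right hsum (Real.exp_pos _).le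
      _ = (4/3 : ℝ) ^ n * Real.exp (-L/4) := by rw [mul_assoc, hexp]
  refine step.trans ?_
  have hexp2 : Real.exp (-L/4) ≤ Real.exp (-((N : ℝ) * ε) / 4) := by
    apply Real.exp_le_exp.mpr; linarith
  have hpow : (4/3 : ℝ) ^ n ≤ 2 * (12 / ε) ^ d := by
    have h12 : (12:ℝ) ≤ 12 / ε := by
      rw [le_div_iff₀ hε0]; nlinarith
    have hd0 : (0:ℝ) ≤ d := le_trans (Nat.cast_nonneg n) hd
    have c1 : (4/3 : ℝ) ^ n ≤ (12:ℝ) ^ n := by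
      apply pow_le_pow_left₀ (by norm_num) (by norm_num)
    have c2 : (12:ℝ) ^ n = (12:ℝ) ^ (n:ℝ) := (Real.rpow_natCast 12 n).symm
    have c3 : (12:ℝ) ^ (n:ℝ) ≤ (12:ℝ) ^ d :=
      Real.rpow_le_rpow_of_exponent_le (by norm_num) hd
    have c4 : (12:ℝ) ^ d ≤ (12/ε) ^ d := Real.rpow_le_rpow (by norm_num) h12 hd0
    have c5 : (0:ℝ) ≤ (12/ε) ^ d := Real.rpow_nonneg (by positivity) d
    calc (4/3 : ℝ) ^ n ≤ (12:ℝ) ^ d := by rw [c2] at c1; exact c1.trans c3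
      _ ≤ (12/ε) ^ d := c4
      _ ≤ 2 * (12/ε) ^ d := by linarith
  calc (4/3 : ℝ) ^ n * Real.exp (-L/4)
      ≤ (4/3 : ℝ) ^ n * Real.exp (-((N : ℝ) * ε) / 4) := by
        apply mul_le_mul_of_nonneg_left hexp2 (by positivity)
    _ ≤ 2 * (12 / ε) ^ d * Real.exp (-((N : ℝ) * ε) / 4) := by
        apply mul_le_mul_of_nonneg_right hpow (Real.exp_pos _).le
    _ = 2 * Real.exp (-((N : ℝ) * ε) / 4) * (12 / ε) ^ d := by ring
end
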